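/- arXiv:2307.14054 — 4 statements merged into one kernel-verified Lean document; each statement's English description precedes it below -/
import Mathlib

section
/- Let a be odd, n ≥ 2 even, and set ε = ⌊a/2⌋. Let U^a_n be the set of vertices of Π^a_n that agree with the constant string ε̂ = εε⋯ε in all positions except possibly one position i (1 ≤ i ≤ n), where the letter is ε+1 with i even, or ε−1 with i odd. Then the center of Π^a_n equals U^a_n. -/
/-- Strings of length `n` over the alphabet `{0,1,…,a}` in which the letter `a`
occurs only immediately after a `0` (i.e. `a` appears only inside blocks `0a`). -/
def MetallicOK (a n : ℕ) (α : Fin n → Fin (a + 1)) : Prop :=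
  ∀ i : Fin n, (α i : ℕ) = a →
    ∃ j : Fin n, (j : ℕ) + 1 = (i : ℕ) ∧ (α j : ℕ) = 0

instance (a n : ℕ) : DecidablePred (MetallicOK a n) := fun α => by
  unfold MetallicOK; infer_instance

/-- Vertices of the metallic cube `Π^a_n`. -/
abbrev MetallicVertex (a n : ℕ) : Type :=
  {α : Fin n → Fin (a + 1) // MetallicOK a n α}

/-- The metallic cube `Π^a_n`: two strings are adjacent iff `Σ_i |α_i - β_i| = 1`. -/
def metallicCube (a n : ℕ) : SimpleGraph (MetallicVertex a n) where
  Adj u v := (∑ i : Fin n, Nat.dist (u.1 i : ℕ) (v.1 i : ℕ)) = 1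
  symm := by
    constructor
    intro u v h
    simpa [Nat.dist_comm] using h
  loopless := by
    constructor
    intro u h
    simp [Nat.dist_self] at h

instance (a n : ℕ) : DecidableRel (metallicCube a n).Adj := fun u v =>
  inferInstanceAs (Decidable ((∑ i : Fin n, Nat.dist (u.1 i : ℕ) (v.1 i : ℕ)) = 1))

/-- The eccentricity of a vertex of the metallic cube: the maximum distance
from `v` to any vertex. -/
noncomputable def ecc (a n : ℕ) (v : MetallicVertex a n) : ℕ :=
  Finset.univ.sup fun u => (metallicCube a n).dist v u

/-!
Distances in `Π^a_n` are ℓ¹ distances: from `u ≠ v` one can change one letter by one towards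
`v` and stay in the cube (lower a letter lying above `v` if there is one, otherwise raise one).

Write `a = 2ε + 1`, `n = 2m` and cut strings into the blocks `(v_{2k}, v_{2k+1})`. Any block of `v`
is at distance at least `a` from one of the blocks `0a`, `(a-1)0`, which fit anywhere, so every
eccentricity is at least `ma`. A block outside `{εε, ε(ε+1), (ε-1)ε}` is at distance `a + 1`
from such a block, and if two blocks differ from `εε`, both gain one against the chain
`(a-1)0 a0 ⋯ a0`, which loses only one on its first block; so vertices outside `U` have
eccentricity above `ma`. Conversely, for `v ∈ U` every block costs at most `a`, except that the
block of `v` differing from `εε` may cost `a + 1` when the opposite block starts with `a`; the run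
of blocks starting with `a` that contains it is preceded by a block without `a`, costing at most
`a - 1`. Hence the radius is `ma` and the center is `U`.
-/

open Finset

theorem SimpleGraph.dist_eq_of_exists_adj_lt {V : Type*} (G : SimpleGraph V) (d : V → V → ℕ)
    (hd_eq_zero : ∀ u v, d u v = 0 ↔ u = v)
    (hd_adj : ∀ u w v, G.Adj u w → d u v ≤ d w v + 1)
    (hd_step : ∀ u v, u ≠ v → ∃ w, G.Adj u w ∧ d w v < d u v) (u v : V) :
    G.dist u v = d u v := by
  have le_length : ∀ {u} (p : G.Walk u v), d u v ≤ p.length := by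
    intro u p
    induction p with
    | nil => simp [(hd_eq_zero _ _).2 rfl]
    | cons h _ ih => simpa using (hd_adj _ _ _ h).trans (by omega)
  have exists_walk : ∀ k u, d u v = k → ∃ p : G.Walk u v, p.length = k := by
    intro k
    induction k with
    | zero => intro u hu; obtain rfl := (hd_eq_zero u v).1 hu; exact ⟨.nil, rfl⟩
    | succ k ih =>
      intro u hu
      obtain ⟨w, hw, hlt⟩ := hd_step u v (by rintro rfl; simp [(hd_eq_zero _ _).2 rfl] at hu)
      obtain ⟨p, hp⟩ := ih w (by have := hd_adj u w v hw; omega)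
      exact ⟨.cons hw p, by simp [hp]⟩
  obtain ⟨p, hp⟩ := exists_walk _ u rfl
  obtain ⟨q, hq⟩ := p.reachable.exists_walk_length_eq_dist
  exact le_antisymm (hp ▸ G.dist_le p) (hq ▸ le_length q)

section Distance

variable {a n : ℕ}

def metallicDist (u v : MetallicVertex a n) : ℕ := ∑ i, Nat.dist (u.1 i : ℕ) (v.1 i)

theorem metallicCube_adj_iff {u v : MetallicVertex a n} :
    (metallicCube a n).Adj u v ↔ metallicDist u v = 1 := Iff.rfl

theorem metallicDist_eq_zero_iff {u v : MetallicVertex a n} : metallicDist u v = 0 ↔ u = v := by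
  simp only [metallicDist, sum_eq_zero_iff, mem_univ, true_implies, Subtype.ext_iff,
    funext_iff, Fin.ext_iff]
  exact forall_congr' fun i => ⟨Nat.eq_of_dist_eq_zero, Nat.dist_eq_zero⟩

theorem metallicDist_le_add (u w v : MetallicVertex a n) :
    metallicDist u v ≤ metallicDist u w + metallicDist w v := by
  rw [metallicDist, metallicDist, metallicDist, ← sum_add_distrib]
  exact sum_le_sum fun i _ => Nat.dist.triangle_inequality _ _ _

theorem sum_dist_add_of_eq_of_ne {ι : Type*} [Fintype ι] [DecidableEq ι] {f g h : ι → ℕ} {i : ι}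
    (hfg : ∀ j ≠ i, f j = g j) :
    ∑ j, Nat.dist (f j) (h j) + Nat.dist (g i) (h i) =
      ∑ j, Nat.dist (g j) (h j) + Nat.dist (f i) (h i) := by
  rw [← add_sum_erase _ _ (mem_univ i), ← add_sum_erase _ _ (mem_univ i),
    sum_congr rfl fun j hj => by rw [hfg j (ne_of_mem_erase hj)]]
  ring

theorem adj_and_metallicDist_lt_of_eq_of_ne {u w v : MetallicVertex a n} {i : Fin n}
    (hw : ∀ j ≠ i, w.1 j = u.1 j) (hstep : Nat.dist (u.1 i) (w.1 i) = 1)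
    (hlt : Nat.dist (w.1 i : ℕ) (v.1 i) < Nat.dist (u.1 i : ℕ) (v.1 i)) :
    (metallicCube a n).Adj u w ∧ metallicDist w v < metallicDist u v := by
  have hw' : ∀ j ≠ i, (w.1 j : ℕ) = u.1 j := fun j hj => by rw [hw j hj]
  constructor
  · have := sum_dist_add_of_eq_of_ne (h := fun j => (w.1 j : ℕ)) fun j hj => (hw' j hj).symm
    simp only [Nat.dist_self, add_zero, sum_const_zero, zero_add] at this
    exact this.trans hstep
  · have := sum_dist_add_of_eq_of_ne (h := fun j => (v.1 j : ℕ)) hw'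
    unfold metallicDist
    omega

theorem MetallicOK.update_pred {u : Fin n → Fin (a + 1)} (hu : MetallicOK a n u) {i : Fin n}
    (c : Fin (a + 1)) (hc : (c : ℕ) + 1 = u i) : MetallicOK a n (Function.update u i c) := by
  intro j hj
  have hji : j ≠ i := by rintro rfl; simp at hj; omega
  rw [Function.update_of_ne hji] at hj
  obtain ⟨k, hkj, hk⟩ := hu j hj
  have hki : k ≠ i := by rintro rfl; omega
  exact ⟨k, hkj, by rwa [Function.update_of_ne hki]⟩

theorem MetallicOK.update_succ {u v : Fin n → Fin (a + 1)} (hu : MetallicOK a n u)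
    (hv : MetallicOK a n v) (huv : ∀ j, (u j : ℕ) ≤ v j) {i : Fin n}
    (c : Fin (a + 1)) (hc : (c : ℕ) = u i + 1) (hcv : (c : ℕ) ≤ v i) :
    MetallicOK a n (Function.update u i c) := by
  intro j hj
  by_cases hji : j = i
  · subst hji
    simp only [Function.update_self] at hj
    obtain ⟨k, hkj, hk⟩ := hv j (by have := (v j).2; omega)
    have hkj' : k ≠ j := by rintro rfl; omega
    refine ⟨k, hkj, ?_⟩
    rw [Function.update_of_ne hkj']
    have := huv k; omega
  · rw [Function.update_of_ne hji] at hj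
    obtain ⟨k, hkj, hk⟩ := hu j hj
    have hki : k ≠ i := by
      rintro rfl
      obtain ⟨l, hlj, hl⟩ := hv j (by have := huv j; have := (v j).2; omega)
      obtain rfl : l = k := Fin.ext (by omega)
      omega
    exact ⟨k, hkj, by rwa [Function.update_of_ne hki]⟩

theorem exists_adj_metallicDist_lt {u v : MetallicVertex a n} (huv : u ≠ v) :
    ∃ w, (metallicCube a n).Adj u w ∧ metallicDist w v < metallicDist u v := by
  by_cases hdown : ∃ i, (v.1 i : ℕ) < u.1 i
  · obtain ⟨i, hi⟩ := hdown
    let c : Fin (a + 1) := ⟨(u.1 i : ℕ) - 1, by have := (u.1 i).2; omega⟩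
    refine ⟨⟨_, u.2.update_pred (i := i) c (by simp [c]; omega)⟩, ?_⟩
    exact adj_and_metallicDist_lt_of_eq_of_ne (i := i) (fun j hj => Function.update_of_ne hj _ _)
      (by simp [c, Nat.dist]; omega) (by simp [c, Nat.dist]; omega)
  · push Not at hdown
    obtain ⟨i, hi⟩ : ∃ i, (u.1 i : ℕ) < v.1 i := by
      by_contra! hge
      exact huv (Subtype.ext (funext fun i => Fin.ext (le_antisymm (hdown i) (hge i))))
    let c : Fin (a + 1) := ⟨(u.1 i : ℕ) + 1, by have := (v.1 i).2; omega⟩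
    refine ⟨⟨_, u.2.update_succ v.2 hdown (i := i) c rfl hi⟩, ?_⟩
    exact adj_and_metallicDist_lt_of_eq_of_ne (i := i) (fun j hj => Function.update_of_ne hj _ _)
      (by simp [c, Nat.dist]) (by simp [c, Nat.dist]; omega)

theorem metallicCube_dist (u v : MetallicVertex a n) :
    (metallicCube a n).dist u v = metallicDist u v :=
  (metallicCube a n).dist_eq_of_exists_adj_lt _ (fun _ _ => metallicDist_eq_zero_iff)
    (fun u w v h => (metallicDist_le_add u w v).trans_eq
      (by rw [metallicCube_adj_iff.1 h, add_comm]))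
    (fun _ _ => exists_adj_metallicDist_lt) u v

theorem metallicDist_le_ecc (v u : MetallicVertex a n) : metallicDist v u ≤ ecc a n v :=
  metallicCube_dist v u ▸ Finset.le_sup (f := fun u => (metallicCube a n).dist v u) (mem_univ u)

theorem ecc_le_of_forall_metallicDist_le {v : MetallicVertex a n} {N : ℕ}
    (h : ∀ u, metallicDist v u ≤ N) : ecc a n v ≤ N :=
  Finset.sup_le fun u _ => metallicCube_dist v u ▸ h u

end Distance

theorem Nat.exists_lt_not_and_succ {P : ℕ → Prop} (h0 : ¬P 0) {p : ℕ} (hp : P p) :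
    ∃ k < p, ¬P k ∧ P (k + 1) := by
  induction p with
  | zero => exact absurd hp h0
  | succ p ih =>
    by_cases h : P p
    · obtain ⟨k, hk, hk'⟩ := ih h
      exact ⟨k, by omega, hk'⟩
    · exact ⟨p, by omega, h, hp⟩

theorem Finset.sum_range_two_mul {M : Type*} [AddCommMonoid M] (f : ℕ → M) (m : ℕ) :
    ∑ i ∈ range (2 * m), f i = ∑ k ∈ range m, (f (2 * k) + f (2 * k + 1)) := by
  induction m with
  | zero => simp
  | succ m ih => rw [mul_add, sum_range_succ, sum_range_succ, sum_range_succ, ih, add_assoc]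

namespace MetallicVertex

variable {a n : ℕ}

def get (v : MetallicVertex a n) (i : ℕ) : ℕ := if h : i < n then v.1 ⟨i, h⟩ else 0

theorem get_of_lt (v : MetallicVertex a n) {i : ℕ} (h : i < n) : v.get i = v.1 ⟨i, h⟩ :=
  dif_pos h

theorem get_le (v : MetallicVertex a n) (i : ℕ) : v.get i ≤ a := by
  unfold get
  split
  · exact Nat.lt_succ_iff.mp (v.1 _).2
  · omega

theorem get_eq_zero_of_get_succ (ha : 1 ≤ a) (v : MetallicVertex a n) {i : ℕ}
    (h : v.get (i + 1) = a) : v.get i = 0 := by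
  by_cases hi : i + 1 < n
  · rw [get_of_lt v hi] at h
    obtain ⟨j, hj, hj0⟩ := v.2 _ h
    rwa [get_of_lt v (by omega),
      show (⟨i, _⟩ : Fin n) = j from Fin.ext (by simp only at hj ⊢; omega)]
  · simp [get, hi] at h; omega

theorem get_zero_ne (ha : 1 ≤ a) (v : MetallicVertex a n) : v.get 0 ≠ a := by
  intro h
  by_cases h0 : 0 < n
  · rw [get_of_lt v h0] at h
    obtain ⟨j, hj, -⟩ := v.2 _ h
    simp at hj
  · simp [get, h0] at h; omega

theorem metallicDist_eq_sum_range (u v : MetallicVertex a n) :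
    metallicDist u v = ∑ i ∈ range n, Nat.dist (u.get i) (v.get i) := by
  rw [← Fin.sum_univ_eq_sum_range]
  exact sum_congr rfl fun i _ => by rw [get_of_lt u i.2, get_of_lt v i.2]

def pair (v : MetallicVertex a n) (k : ℕ) : ℕ × ℕ := (v.get (2 * k), v.get (2 * k + 1))

end MetallicVertex

def pairDist (x y : ℕ × ℕ) : ℕ := Nat.dist x.1 y.1 + Nat.dist x.2 y.2

theorem metallicDist_eq_sum_pairDist {a m : ℕ} (u v : MetallicVertex a (2 * m)) :
    metallicDist u v = ∑ k ∈ range m, pairDist (u.pair k) (v.pair k) := by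
  rw [MetallicVertex.metallicDist_eq_sum_range, Finset.sum_range_two_mul]
  rfl

/-- The block sequences `k ↦ (v_{2k}, v_{2k+1})` of the strings `v` of `Π^a_{2m}`. -/
structure IsPairPattern (a : ℕ) (P : ℕ → ℕ × ℕ) : Prop where
  fst_le : ∀ k, (P k).1 ≤ a
  snd_le : ∀ k, (P k).2 ≤ a
  fst_zero_ne : (P 0).1 ≠ a
  fst_eq_zero_of_snd : ∀ k, (P k).2 = a → (P k).1 = 0
  snd_eq_zero_of_fst_succ : ∀ k, (P (k + 1)).1 = a → (P k).2 = 0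

theorem MetallicVertex.isPairPattern_pair {a n : ℕ} (ha : 1 ≤ a) (u : MetallicVertex a n) :
    IsPairPattern a u.pair where
  fst_le _ := u.get_le _
  snd_le _ := u.get_le _
  fst_zero_ne := u.get_zero_ne ha
  fst_eq_zero_of_snd _ := u.get_eq_zero_of_get_succ ha
  snd_eq_zero_of_fst_succ k h := u.get_eq_zero_of_get_succ ha (i := 2 * k + 1) h

def interleave (P : ℕ → ℕ × ℕ) (i : ℕ) : ℕ :=
  if i % 2 = 0 then (P (i / 2)).1 else (P (i / 2)).2

theorem interleave_two_mul (P : ℕ → ℕ × ℕ) (k : ℕ) : interleave P (2 * k) = (P k).1 := by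
  simp [interleave]

theorem interleave_two_mul_add_one (P : ℕ → ℕ × ℕ) (k : ℕ) :
    interleave P (2 * k + 1) = (P k).2 := by
  simp [interleave, Nat.add_mod, show (2 * k + 1) / 2 = k by omega]

namespace IsPairPattern

variable {a : ℕ} {P : ℕ → ℕ × ℕ}

theorem interleave_le (hP : IsPairPattern a P) (i : ℕ) : interleave P i ≤ a := by
  obtain ⟨k, rfl | rfl⟩ := Nat.even_or_odd' i
  · exact (interleave_two_mul P k).trans_le (hP.fst_le k)
  · exact (interleave_two_mul_add_one P k).trans_le (hP.snd_le k)

theorem interleave_eq_zero_of_succ (hP : IsPairPattern a P) {i : ℕ}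
    (h : interleave P (i + 1) = a) : interleave P i = 0 := by
  obtain ⟨k, rfl | rfl⟩ := Nat.even_or_odd' i
  · rw [interleave_two_mul_add_one] at h
    rw [interleave_two_mul, hP.fst_eq_zero_of_snd k h]
  · rw [show 2 * k + 1 + 1 = 2 * (k + 1) by ring, interleave_two_mul] at h
    rw [interleave_two_mul_add_one, hP.snd_eq_zero_of_fst_succ k h]

def vertex (hP : IsPairPattern a P) (m : ℕ) : MetallicVertex a (2 * m) :=
  ⟨fun i => ⟨interleave P i, Nat.lt_succ_of_le (hP.interleave_le i)⟩, fun i hi => by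
    change interleave P i = a at hi
    obtain ⟨j, hj⟩ : ∃ j, (i : ℕ) = j + 1 := Nat.exists_eq_succ_of_ne_zero fun h =>
      hP.fst_zero_ne (by rwa [h, ← mul_zero 2, interleave_two_mul] at hi)
    rw [hj] at hi
    exact ⟨⟨j, by omega⟩, hj.symm, hP.interleave_eq_zero_of_succ hi⟩⟩

theorem pair_vertex (hP : IsPairPattern a P) {m k : ℕ} (hk : k < m) :
    (hP.vertex m).pair k = P k := by
  simp [MetallicVertex.pair, MetallicVertex.get, vertex, show 2 * k < 2 * m by omega,
    show 2 * k + 1 < 2 * m by omega, interleave_two_mul, interleave_two_mul_add_one]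

theorem sum_pairDist_le_ecc (hP : IsPairPattern a P) {m : ℕ} (v : MetallicVertex a (2 * m)) :
    ∑ k ∈ range m, pairDist (v.pair k) (P k) ≤ ecc a (2 * m) v := by
  refine le_trans (le_of_eq ?_) (metallicDist_le_ecc v (hP.vertex m))
  rw [metallicDist_eq_sum_pairDist]
  exact sum_congr rfl fun k hk => by rw [hP.pair_vertex (mem_range.1 hk)]

end IsPairPattern

/-- A block that may stand anywhere in a string, whatever its neighbours. -/
def IsFreePair (a : ℕ) (q : ℕ × ℕ) : Prop := q.1 < a ∧ q.2 ≤ a ∧ (q.2 = a → q.1 = 0)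

theorem IsPairPattern.of_isFreePair {a : ℕ} {P : ℕ → ℕ × ℕ}
    (hP : ∀ k, IsFreePair a (P k)) : IsPairPattern a P where
  fst_le k := (hP k).1.le
  snd_le k := (hP k).2.1
  fst_zero_ne := (hP 0).1.ne
  fst_eq_zero_of_snd k := (hP k).2.2
  snd_eq_zero_of_fst_succ k h := absurd h (hP (k + 1)).1.ne

theorem exists_isFreePair_le_pairDist {a : ℕ} (ha : 1 ≤ a) (x : ℕ × ℕ) :
    ∃ q, IsFreePair a q ∧ a ≤ pairDist x q := by
  rcases le_or_gt x.2 x.1 with h | h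
  · exact ⟨(0, a), by simp [IsFreePair]; omega, by simp [pairDist, Nat.dist]; omega⟩
  · exact ⟨(a - 1, 0), by simp [IsFreePair]; omega, by simp [pairDist, Nat.dist]; omega⟩

theorem mul_le_ecc {a m : ℕ} (ha : 1 ≤ a) (v : MetallicVertex a (2 * m)) :
    m * a ≤ ecc a (2 * m) v := by
  choose Q hQ hQv using fun k => exists_isFreePair_le_pairDist ha (v.pair k)
  calc m * a = ∑ _k ∈ range m, a := by simp
    _ ≤ ∑ k ∈ range m, pairDist (v.pair k) (Q k) := sum_le_sum fun k _ => hQv k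
    _ ≤ ecc a (2 * m) v := (IsPairPattern.of_isFreePair hQ).sum_pairDist_le_ecc v

def chainPattern (a K : ℕ) (Q : ℕ → ℕ × ℕ) (k : ℕ) : ℕ × ℕ :=
  if k = 0 then (a - 1, 0) else if k ≤ K then (a, 0) else Q k

theorem chainPattern_of_le {a K k : ℕ} (Q : ℕ → ℕ × ℕ) (hk : k ≤ K) :
    chainPattern a K Q k = (if k = 0 then a - 1 else a, 0) := by
  unfold chainPattern; split_ifs <;> rfl

theorem chainPattern_of_lt {a K k : ℕ} (Q : ℕ → ℕ × ℕ) (hk : K < k) :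
    chainPattern a K Q k = Q k := by
  simp [chainPattern, show k ≠ 0 by omega, show ¬k ≤ K by omega]

theorem isPairPattern_chainPattern {a : ℕ} (ha : 1 ≤ a) {Q : ℕ → ℕ × ℕ}
    (hQ : ∀ k, IsFreePair a (Q k)) (K : ℕ) : IsPairPattern a (chainPattern a K Q) where
  fst_le k := by unfold chainPattern; split_ifs <;> first | omega | exact (hQ k).1.le
  snd_le k := by unfold chainPattern; split_ifs <;> first | simp | exact (hQ k).2.1
  fst_zero_ne := by simp [chainPattern]; omega
  fst_eq_zero_of_snd k := by
    unfold chainPattern; split_ifs <;> first | simp; omega | exact (hQ k).2.2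
  snd_eq_zero_of_fst_succ k h := by
    have hk : k + 1 ≤ K := by
      by_contra hk
      rw [chainPattern_of_lt Q (by omega)] at h
      exact (hQ (k + 1)).1.ne h
    rw [chainPattern_of_le Q (by omega)]

def IsCentralPair (e : ℕ) (x : ℕ × ℕ) : Prop :=
  x = (e, e) ∨ x = (e, e + 1) ∨ (x.1 + 1 = e ∧ x.2 = e)

/-- The set `U^a_{2m}`, read block by block (see `isPairwiseCentral_iff`). -/
def IsPairwiseCentral {a m : ℕ} (e : ℕ) (v : MetallicVertex a (2 * m)) : Prop :=
  (∀ k < m, IsCentralPair e (v.pair k)) ∧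
    ∀ k < m, ∀ l < m, v.pair k ≠ (e, e) → v.pair l ≠ (e, e) → k = l

section PairBounds

variable {e : ℕ} {x y : ℕ × ℕ}

theorem exists_isFreePair_lt_pairDist (hx : ¬IsCentralPair e x) :
    ∃ q, IsFreePair (2 * e + 1) q ∧ 2 * e + 1 < pairDist x q := by
  simp only [IsCentralPair, Prod.ext_iff, not_or, not_and] at hx
  by_cases h1 : x.2 < x.1
  · exact ⟨(0, 2 * e + 1), by simp [IsFreePair], by simp [pairDist, Nat.dist]; omega⟩
  by_cases h2 : x.1 + 2 ≤ x.2
  · exact ⟨(2 * e, 0), by simp [IsFreePair], by simp [pairDist, Nat.dist]; omega⟩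
  by_cases h3 : 2 * e + 2 ≤ x.1 + x.2
  · exact ⟨(0, 0), by simp [IsFreePair], by simp [pairDist, Nat.dist]; omega⟩
  · exact ⟨(2 * e, 2 * e), by simp [IsFreePair], by simp [pairDist, Nat.dist]; omega⟩

theorem pairDist_const_le (hy₁ : y.1 ≤ 2 * e + 1) (hy₂ : y.2 ≤ 2 * e + 1)
    (hy : y.2 = 2 * e + 1 → y.1 = 0) : pairDist (e, e) y ≤ 2 * e + 1 := by
  simp only [pairDist, Nat.dist]; omega

theorem pairDist_const_lt (hy₁ : y.1 < 2 * e + 1) (hy₂ : y.2 < 2 * e + 1) :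
    pairDist (e, e) y < 2 * e + 1 := by
  simp only [pairDist, Nat.dist]; omega

theorem pairDist_le_of_isCentralPair (hx : IsCentralPair e x) (hy₁ : y.1 < 2 * e + 1)
    (hy₂ : y.2 ≤ 2 * e + 1) (hy : y.2 = 2 * e + 1 → y.1 = 0) :
    pairDist x y ≤ 2 * e + 1 := by
  rcases hx with rfl | rfl | ⟨hx₁, hx₂⟩ <;> simp only [pairDist, Nat.dist] at * <;> omega

theorem pairDist_le_succ_of_isCentralPair (hx : IsCentralPair e x) (hy₁ : y.1 ≤ 2 * e + 1)
    (hy₂ : y.2 ≤ 2 * e + 1) (hy : y.2 = 2 * e + 1 → y.1 = 0) :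
    pairDist x y ≤ 2 * e + 2 := by
  rcases hx with rfl | rfl | ⟨hx₁, hx₂⟩ <;> simp only [pairDist, Nat.dist] at * <;> omega

theorem IsCentralPair.pairDist_eq (hx : IsCentralPair e x) {c : ℕ} (hc : e ≤ c) :
    pairDist x (c, 0) = c + if x = (e, e) then 0 else 1 := by
  rcases hx with rfl | rfl | ⟨hx₁, hx₂⟩
  · simp [pairDist, Nat.dist]; omega
  · simp [pairDist, Nat.dist]; omega
  · have : x ≠ (e, e) := fun h => by simp [h] at hx₁
    simp only [pairDist, Nat.dist, if_neg this]; omega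

end PairBounds

section CenterBounds

variable {e m : ℕ} {v : MetallicVertex (2 * e + 1) (2 * m)} {Q : ℕ → ℕ × ℕ}

/-- The run of blocks of `Q` starting with `a` that ends at block `p` is preceded by a block
without any `a`, whose cost is at most `a - 1`. -/
theorem sum_pairDist_le_of_fst_eq (hv : IsPairwiseCentral e v) (hQ : IsPairPattern (2 * e + 1) Q)
    {p : ℕ} (hpm : p < m) (hp : v.pair p ≠ (e, e)) (hQp : (Q p).1 = 2 * e + 1) :
    ∑ k ∈ range m, pairDist (v.pair k) (Q k) ≤ m * (2 * e + 1) := by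
  obtain ⟨k, hkp, hk, hk1⟩ :=
    Nat.exists_lt_not_and_succ (P := fun j => (Q j).1 = 2 * e + 1) hQ.fst_zero_ne hQp
  have hk2 := hQ.snd_eq_zero_of_fst_succ k hk1
  have hconst : ∀ i < m, i ≠ p → v.pair i = (e, e) := fun i hi hip => by
    by_contra h
    exact hip (hv.2 i hi p hpm h hp)
  have hpoint : ∀ i ∈ range m, pairDist (v.pair i) (Q i) + (if i = k then 1 else 0) ≤
      2 * e + 1 + (if i = p then 1 else 0) := by
    intro i hi
    rw [mem_range] at hi
    by_cases hip : i = p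
    · subst hip
      simp only [if_neg hkp.ne', if_true]
      exact pairDist_le_succ_of_isCentralPair (hv.1 i hi) (hQ.fst_le i) (hQ.snd_le i)
        (hQ.fst_eq_zero_of_snd i)
    · rw [if_neg hip, hconst i hi hip]
      by_cases hik : i = k
      · subst hik
        rw [if_pos rfl]
        exact pairDist_const_lt (lt_of_le_of_ne (hQ.fst_le i) hk) (by omega)
      · rw [if_neg hik]
        exact pairDist_const_le (hQ.fst_le i) (hQ.snd_le i) (hQ.fst_eq_zero_of_snd i)
  have hsum := sum_le_sum hpoint
  simp only [sum_add_distrib, sum_ite_eq', mem_range, hpm, show k < m by omega, if_true,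
    sum_const, card_range, smul_eq_mul] at hsum
  linarith

theorem sum_pairDist_le_of_isPairwiseCentral (hv : IsPairwiseCentral e v)
    (hQ : IsPairPattern (2 * e + 1) Q) :
    ∑ k ∈ range m, pairDist (v.pair k) (Q k) ≤ m * (2 * e + 1) := by
  by_cases hrun : ∃ p < m, v.pair p ≠ (e, e) ∧ (Q p).1 = 2 * e + 1
  · obtain ⟨p, hpm, hp, hQp⟩ := hrun
    exact sum_pairDist_le_of_fst_eq hv hQ hpm hp hQp
  push Not at hrun
  calc ∑ k ∈ range m, pairDist (v.pair k) (Q k) ≤ ∑ _k ∈ range m, (2 * e + 1) := by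
        refine sum_le_sum fun i hi => ?_
        rw [mem_range] at hi
        by_cases hi' : v.pair i = (e, e)
        · rw [hi']
          exact pairDist_const_le (hQ.fst_le i) (hQ.snd_le i) (hQ.fst_eq_zero_of_snd i)
        · exact pairDist_le_of_isCentralPair (hv.1 i hi)
            (lt_of_le_of_ne (hQ.fst_le i) (hrun i hi hi')) (hQ.snd_le i)
            (hQ.fst_eq_zero_of_snd i)
    _ = m * (2 * e + 1) := by simp

theorem ecc_le_of_isPairwiseCentral (hv : IsPairwiseCentral e v) :
    ecc (2 * e + 1) (2 * m) v ≤ m * (2 * e + 1) :=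
  ecc_le_of_forall_metallicDist_le fun u => (metallicDist_eq_sum_pairDist v u).trans_le
    (sum_pairDist_le_of_isPairwiseCentral hv (u.isPairPattern_pair (by omega)))

end CenterBounds

section NonCenter

variable {e m : ℕ}

theorem lt_ecc_of_not_isCentralPair (v : MetallicVertex (2 * e + 1) (2 * m)) {k₀ : ℕ}
    (hk₀ : k₀ < m) (hv : ¬IsCentralPair e (v.pair k₀)) :
    m * (2 * e + 1) < ecc (2 * e + 1) (2 * m) v := by
  obtain ⟨q, hq, hqv⟩ := exists_isFreePair_lt_pairDist hv
  choose Q hQ hQv using fun k =>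
    exists_isFreePair_le_pairDist (a := 2 * e + 1) (by omega) (v.pair k)
  let P k := if k = k₀ then q else Q k
  have hP : IsPairPattern (2 * e + 1) P :=
    .of_isFreePair fun k => by by_cases hk : k = k₀ <;> simp [P, hk, hq, hQ]
  have hpoint : ∀ k ∈ range m,
      2 * e + 1 + (if k = k₀ then 1 else 0) ≤ pairDist (v.pair k) (P k) := by
    intro k _
    by_cases hk : k = k₀
    · subst hk; simpa [P] using hqv
    · simpa [P, hk] using hQv k
  have := (sum_le_sum hpoint).trans (hP.sum_pairDist_le_ecc v)
  simp only [sum_add_distrib, sum_ite_eq', mem_range, hk₀, if_true,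
    sum_const, card_range, smul_eq_mul] at this
  linarith

/-- Two blocks `j < K` differing from `εε` both gain one against the chain pattern up to `K`,
which loses only one at block `0`. -/
theorem lt_ecc_of_two_ne_const {v : MetallicVertex (2 * e + 1) (2 * m)}
    (hv : ∀ k < m, IsCentralPair e (v.pair k)) {j K : ℕ} (hjK : j < K) (hKm : K < m)
    (hj : v.pair j ≠ (e, e)) (hK : v.pair K ≠ (e, e)) :
    m * (2 * e + 1) < ecc (2 * e + 1) (2 * m) v := by
  choose Q hQ hQv using fun k =>
    exists_isFreePair_le_pairDist (a := 2 * e + 1) (by omega) (v.pair k)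
  have hP := isPairPattern_chainPattern (by omega) hQ K
  have hpoint : ∀ k ∈ range m,
      2 * e + 1 + (if k = j then 1 else 0) + (if k = K then 1 else 0) ≤
        pairDist (v.pair k) (chainPattern (2 * e + 1) K Q k) + (if k = 0 then 1 else 0) := by
    intro k hk
    rw [mem_range] at hk
    by_cases hkK : k ≤ K
    · have hconst : v.pair k = (e, e) → k ≠ j ∧ k ≠ K := fun h =>
        ⟨by rintro rfl; exact hj h, by rintro rfl; exact hK h⟩
      rw [chainPattern_of_le Q hkK, (hv k hk).pairDist_eq (by split_ifs <;> omega)]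
      by_cases hc : v.pair k = (e, e)
      · simp only [hc, if_true, if_neg (hconst hc).1, if_neg (hconst hc).2]
        split_ifs <;> omega
      · simp only [hc, if_false]
        split_ifs <;> omega
    · rw [chainPattern_of_lt Q (by omega)]
      simp only [show k ≠ 0 by omega, show k ≠ j by omega, show k ≠ K by omega, if_false,
        add_zero]
      exact hQv k
  have hsum := sum_le_sum hpoint
  have hecc := hP.sum_pairDist_le_ecc v
  simp only [sum_add_distrib, sum_ite_eq', mem_range, hKm,
    show j < m by omega, show 0 < m by omega, if_true, sum_const, card_range,
    smul_eq_mul] at hsum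
  linarith

theorem lt_ecc_of_not_isPairwiseCentral {v : MetallicVertex (2 * e + 1) (2 * m)}
    (hv : ¬IsPairwiseCentral e v) : m * (2 * e + 1) < ecc (2 * e + 1) (2 * m) v := by
  by_cases hcen : ∀ k < m, IsCentralPair e (v.pair k)
  · have : ¬∀ k < m, ∀ l < m, v.pair k ≠ (e, e) → v.pair l ≠ (e, e) → k = l :=
      fun h => hv ⟨hcen, h⟩
    push Not at this
    obtain ⟨k, hk, l, hl, hk', hl', hkl⟩ := this
    rcases lt_or_gt_of_ne hkl with h | h
    · exact lt_ecc_of_two_ne_const hcen h hl hk' hl'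
    · exact lt_ecc_of_two_ne_const hcen h hk hl' hk'
  · push Not at hcen
    obtain ⟨k, hk, hk'⟩ := hcen
    exact lt_ecc_of_not_isCentralPair v hk hk'

end NonCenter

theorem isPairwiseCentral_iff {a m : ℕ} (e : ℕ) (v : MetallicVertex a (2 * m)) :
    IsPairwiseCentral e v ↔
      ((∀ j : Fin (2 * m), (v.1 j : ℕ) = e ∨ ((v.1 j : ℕ) = e + 1 ∧ (j : ℕ) % 2 = 1) ∨
          ((v.1 j : ℕ) + 1 = e ∧ (j : ℕ) % 2 = 0)) ∧
        ∀ j k : Fin (2 * m), (v.1 j : ℕ) ≠ e → (v.1 k : ℕ) ≠ e → j = k) := by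
  simp only [Fin.forall_iff, ← v.get_of_lt, Fin.mk.injEq, IsPairwiseCentral, IsCentralPair,
    MetallicVertex.pair, ne_eq, Prod.ext_iff]
  constructor
  · rintro ⟨hcen, hone⟩
    refine ⟨fun i hi => ?_, fun i hi i' hi' h h' => ?_⟩
    · obtain ⟨k, rfl | rfl⟩ := Nat.even_or_odd' i <;> have := hcen k (by omega) <;> omega
    · obtain ⟨k, hk⟩ := Nat.even_or_odd' i
      obtain ⟨k', hk'⟩ := Nat.even_or_odd' i'
      obtain rfl : k = k' := hone k (by omega) k' (by omega)
        (by rcases hk with rfl | rfl <;> omega) (by rcases hk' with rfl | rfl <;> omega)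
      have := hcen k (by omega)
      rcases hk with rfl | rfl <;> rcases hk' with rfl | rfl <;> omega
  · rintro ⟨hletter, hone⟩
    refine ⟨fun k hk => ?_, fun k hk l hl hk' hl' => ?_⟩
    · have := hone (2 * k) (by omega) (2 * k + 1) (by omega)
      have := hletter (2 * k) (by omega)
      have := hletter (2 * k + 1) (by omega)
      omega
    · have := hone (2 * k) (by omega) (2 * l) (by omega)
      have := hone (2 * k) (by omega) (2 * l + 1) (by omega)
      have := hone (2 * k + 1) (by omega) (2 * l) (by omega)
      have := hone (2 * k + 1) (by omega) (2 * l + 1) (by omega)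
      omega

theorem metallic_center_odd_even_general (a n : ℕ) (hao : Odd a) (hne : Even n) :
    ∀ v : MetallicVertex a n,
      (∀ u : MetallicVertex a n, ecc a n v ≤ ecc a n u) ↔
        ((∀ j : Fin n,
            (v.1 j : ℕ) = a / 2 ∨
            ((v.1 j : ℕ) = a / 2 + 1 ∧ (j : ℕ) % 2 = 1) ∨
            ((v.1 j : ℕ) + 1 = a / 2 ∧ (j : ℕ) % 2 = 0)) ∧
          ∀ j k : Fin n,
            (v.1 j : ℕ) ≠ a / 2 → (v.1 k : ℕ) ≠ a / 2 → j = k) := by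
  obtain ⟨e, rfl⟩ := hao
  obtain ⟨m, rfl⟩ := hne.two_dvd
  intro v
  rw [show (2 * e + 1) / 2 = e by omega, ← isPairwiseCentral_iff]
  let c : MetallicVertex (2 * e + 1) (2 * m) :=
    ⟨fun _ => ⟨e, by omega⟩, fun _ h => by simp at h; omega⟩
  have hc : IsPairwiseCentral e c :=
    (isPairwiseCentral_iff e c).2 ⟨fun _ => .inl rfl, fun _ _ h => absurd rfl h⟩
  constructor
  · intro hv
    by_contra hU
    exact (lt_ecc_of_not_isPairwiseCentral hU).not_ge
      ((hv c).trans (ecc_le_of_isPairwiseCentral hc))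
  · exact fun hv u => (ecc_le_of_isPairwiseCentral hv).trans (mul_le_ecc (by omega) u)

/-- for `a` odd and `n ≥ 2` even, the center of `Π^a_n` equals `U^a_n`,
the set of vertices agreeing with `ε̂` (with `ε = ⌊a/2⌋`) everywhere except possibly at
one position, where the letter is `ε+1` at an even (1-indexed) position, i.e. odd
0-indexed position, or `ε−1` at an odd (1-indexed) position, i.e. even 0-indexed
position. -/
theorem metallic_center_odd_even (a n : ℕ) (ha : 1 ≤ a) (hao : Odd a)
    (hn : 2 ≤ n) (hne : Even n) :
    ∀ v : MetallicVertex a n,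
      (∀ u : MetallicVertex a n, ecc a n v ≤ ecc a n u) ↔
        ((∀ j : Fin n,
            (v.1 j : ℕ) = a / 2 ∨
            ((v.1 j : ℕ) = a / 2 + 1 ∧ (j : ℕ) % 2 = 1) ∨
            ((v.1 j : ℕ) + 1 = a / 2 ∧ (j : ℕ) % 2 = 0)) ∧
          ∀ j k : Fin n,
            (v.1 j : ℕ) ≠ a / 2 → (v.1 k : ℕ) ≠ a / 2 → j = k) :=
  metallic_center_odd_even_general a n hao hne
end

section
/- For every integer a ≥ 1 and n ≥ 1, the diameter of the metallic cube Π^a_n equals a·n − 1. Moreover, the periphery of Π^a_n consists of exactly two vertices: the string obtained by repeating the block 0a, namely (0a)^{n/2} if n is even and (0a)^{(n−1)/2}0 if n is odd, and the string beginning with a−1 followed by alternating blocks, namely (a−1)(0a)^{(n−1)/2} if n is odd and (a−1)(0a)^{(n−2)/2}0 if n is even. -/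
/-- The peripheral vertex `0a0a⋯` : letter `a` at odd (0-indexed) positions,
letter `0` elsewhere. -/
def periph₁ (a n : ℕ) (ha : 1 ≤ a) : MetallicVertex a n :=
  ⟨fun i => if (i : ℕ) % 2 = 1 then ⟨a, Nat.lt_succ_self a⟩ else ⟨0, Nat.succ_pos a⟩, by
    intro i h
    have hlt := i.isLt
    by_cases hi : (i : ℕ) % 2 = 1
    · refine ⟨⟨(i : ℕ) - 1, by omega⟩, show (i : ℕ) - 1 + 1 = (i : ℕ) by omega, ?_⟩
      have h2 : ¬((i : ℕ) - 1) % 2 = 1 := by omega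
      simp only [h2, if_false]
    · simp only [hi, if_false] at h
      exact absurd h.symm (by omega)⟩

/-- The peripheral vertex `(a−1)0a0a⋯` : letter `a−1` at position `0`, letter `a` at
even (0-indexed) positions `≥ 2`, letter `0` elsewhere. -/
def periph₂ (a n : ℕ) (ha : 1 ≤ a) : MetallicVertex a n :=
  ⟨fun i =>
    if (i : ℕ) = 0 then ⟨a - 1, by omega⟩
    else if (i : ℕ) % 2 = 0 then ⟨a, Nat.lt_succ_self a⟩ else ⟨0, Nat.succ_pos a⟩, by
    intro i h
    have hlt := i.isLt
    by_cases h0 : (i : ℕ) = 0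
    · simp only [h0, if_true] at h
      exact absurd h (by omega)
    · by_cases h2 : (i : ℕ) % 2 = 0
      · refine ⟨⟨(i : ℕ) - 1, by omega⟩, show (i : ℕ) - 1 + 1 = (i : ℕ) by omega, ?_⟩
        have e0 : ¬((i : ℕ) - 1) = 0 := by omega
        have e1 : ¬((i : ℕ) - 1) % 2 = 0 := by omega
        simp only [e0, e1, if_false]
      · simp only [h0, h2, if_false] at h
        exact absurd h.symm (by omega)⟩

/-!
The graph distance of `Π^a_n` is the `ℓ¹` distance of the strings: from `u ≠ v` one can always
move one letter one step towards `v` and stay in the cube. If some letter of `u` exceeds that of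
`v`, lower it (this creates no `a` and destroys no `0`); otherwise `u ≤ v` letterwise, and raising
a letter below `v`'s keeps every `a` of `u` preceded by a `0`, because `v` is a valid string above `u`.

A string never starts with `a`, so the distance is at most `(a - 1) + a (n - 1) = a n - 1`, with
equality exactly when the first letters of the two strings are `{0, a - 1}` and all later ones
`{0, a}`. Since an `a` must follow a `0`, the pair of letters at position `i + 1` then determines
the pair at position `i`, and reading the strings backwards from the last position leaves only
the two alternating strings `0a0a⋯` and `(a-1)0a0a⋯`.
-/

namespace SimpleGraph

variable {V : Type*} {G : SimpleGraph V} {d : V → V → ℕ}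

theorem Walk.le_length_of_adj (hd : ∀ v, d v v = 0)
    (hadj : ∀ u w v, G.Adj u w → d u v ≤ d w v + 1) {u v : V} (p : G.Walk u v) :
    d u v ≤ p.length := by
  induction p with
  | nil => simp [hd]
  | cons h p ih => rw [Walk.length_cons]; exact (hadj _ _ _ h).trans (by omega)

variable (G)

theorem exists_walk_length_le_of_descent (hdesc : ∀ u v, u ≠ v → ∃ w, G.Adj u w ∧ d w v < d u v)
    (u v : V) : ∃ p : G.Walk u v, p.length ≤ d u v := by
  induction h : d u v using Nat.strong_induction_on generalizing u with
  | _ k ih =>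
    by_cases huv : u = v
    · subst huv
      exact ⟨Walk.nil, by simp⟩
    · obtain ⟨w, hadj, hlt⟩ := hdesc u v huv
      obtain ⟨p, hp⟩ := ih _ (h ▸ hlt) w rfl
      exact ⟨Walk.cons hadj p, by rw [Walk.length_cons]; omega⟩

theorem dist_eq_of_descent (hd : ∀ v, d v v = 0)
    (hadj : ∀ u w v, G.Adj u w → d u v ≤ d w v + 1)
    (hdesc : ∀ u v, u ≠ v → ∃ w, G.Adj u w ∧ d w v < d u v) (u v : V) :
    G.dist u v = d u v := by
  obtain ⟨p, hp⟩ := G.exists_walk_length_le_of_descent hdesc u v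
  obtain ⟨q, hq⟩ := Reachable.exists_walk_length_eq_dist ⟨p⟩
  exact le_antisymm ((dist_le p).trans hp) (hq ▸ q.le_length_of_adj hd hadj)

end SimpleGraph

theorem metallicOK_update {a n : ℕ} {α : Fin n → Fin (a + 1)} (hα : MetallicOK a n α)
    {i : Fin n} {b : Fin (a + 1)}
    (hb : (b : ℕ) = a → ∃ j : Fin n, (j : ℕ) + 1 = i ∧ (α j : ℕ) = 0)
    (hnext : ∀ k : Fin n, (i : ℕ) + 1 = k → (α k : ℕ) = a → (b : ℕ) = 0) :
    MetallicOK a n (Function.update α i b) := by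
  intro k hk
  by_cases hki : k = i
  · subst hki
    rw [Function.update_self] at hk
    obtain ⟨j, hj, hj0⟩ := hb hk
    exact ⟨j, hj, by rwa [Function.update_of_ne (by rintro rfl; omega)]⟩
  · rw [Function.update_of_ne hki] at hk
    obtain ⟨j, hj, hj0⟩ := hα k hk
    refine ⟨j, hj, ?_⟩
    by_cases hji : j = i
    · subst hji
      rw [Function.update_self]
      exact hnext k hj hk
    · rwa [Function.update_of_ne hji]

theorem periph₁_val {a n : ℕ} (ha : 1 ≤ a) (i : Fin n) :
    ((periph₁ a n ha).1 i : ℕ) = if (i : ℕ) % 2 = 1 then a else 0 := by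
  simp only [periph₁]
  split_ifs <;> rfl

theorem periph₂_val {a n : ℕ} (ha : 1 ≤ a) (i : Fin n) :
    ((periph₂ a n ha).1 i : ℕ) =
      if (i : ℕ) = 0 then a - 1 else if (i : ℕ) % 2 = 0 then a else 0 := by
  simp only [periph₂]
  split_ifs <;> rfl

namespace MetallicVertex

variable {a n : ℕ}

def l1Dist (u v : MetallicVertex a n) : ℕ :=
  ∑ i, Nat.dist (u.1 i : ℕ) (v.1 i)

theorem adj_iff {u v : MetallicVertex a n} : (metallicCube a n).Adj u v ↔ u.l1Dist v = 1 :=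
  Iff.rfl

@[simp]
theorem l1Dist_self (v : MetallicVertex a n) : v.l1Dist v = 0 := by
  simp [l1Dist]

theorem l1Dist_comm (u v : MetallicVertex a n) : u.l1Dist v = v.l1Dist u :=
  Finset.sum_congr rfl fun _ _ => Nat.dist_comm _ _

theorem l1Dist_triangle (u v w : MetallicVertex a n) : u.l1Dist w ≤ u.l1Dist v + v.l1Dist w := by
  rw [l1Dist, l1Dist, l1Dist, ← Finset.sum_add_distrib]
  exact Finset.sum_le_sum fun _ _ => Nat.dist.triangle_inequality _ _ _

theorem val_eq_zero_of_succ_eq (v : MetallicVertex a n) {i j : Fin n} (hij : (i : ℕ) + 1 = j)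
    (hj : (v.1 j : ℕ) = a) : (v.1 i : ℕ) = 0 := by
  obtain ⟨k, hk, hk0⟩ := v.2 j hj
  rwa [show i = k from Fin.ext (by omega)]

theorem exists_adj_l1Dist_lt_of_update (u v : MetallicVertex a n) {i : Fin n} {b : Fin (a + 1)}
    (hok : MetallicOK a n (Function.update u.1 i b)) (hstep : Nat.dist (u.1 i) b = 1)
    (hcloser : Nat.dist b (v.1 i) < Nat.dist (u.1 i) (v.1 i)) :
    ∃ w : MetallicVertex a n, (metallicCube a n).Adj u w ∧ w.l1Dist v < u.l1Dist v := by
  refine ⟨⟨_, hok⟩, ?_, ?_⟩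
  · show ∑ j, Nat.dist (u.1 j : ℕ) (Function.update u.1 i b j) = 1
    rw [Fintype.sum_eq_single i fun j hj => by simp [Function.update_of_ne hj]]
    simpa using hstep
  · refine Finset.sum_lt_sum (fun j _ => ?_) ⟨i, Finset.mem_univ _, by simpa using hcloser⟩
    by_cases hj : j = i
    · subst hj
      simpa using hcloser.le
    · simp [Function.update_of_ne hj]

theorem exists_adj_l1Dist_lt {u v : MetallicVertex a n} (huv : u ≠ v) :
    ∃ w, (metallicCube a n).Adj u w ∧ w.l1Dist v < u.l1Dist v := by
  by_cases hdown : ∃ i, (v.1 i : ℕ) < u.1 i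
  · obtain ⟨i, hi⟩ := hdown
    have hua : (u.1 i : ℕ) ≤ a := Fin.is_le _
    refine exists_adj_l1Dist_lt_of_update u v (i := i) (b := ⟨u.1 i - 1, by omega⟩)
      (metallicOK_update u.2 (fun hb => ?_) (fun k hk hka => ?_)) ?_ ?_
    · simp only at hb
      omega
    · have := u.val_eq_zero_of_succ_eq hk hka
      omega
    all_goals simp only [Nat.dist]; omega
  · push Not at hdown
    obtain ⟨i, hi⟩ : ∃ i, (u.1 i : ℕ) < v.1 i := by
      by_contra! h
      exact huv (Subtype.ext (funext fun i => Fin.ext (le_antisymm (hdown i) (h i))))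
    have hva : (v.1 i : ℕ) ≤ a := Fin.is_le _
    refine exists_adj_l1Dist_lt_of_update u v (i := i) (b := ⟨u.1 i + 1, by omega⟩)
      (metallicOK_update u.2 (fun hb => ?_) (fun k hk hka => ?_)) ?_ ?_
    · simp only at hb
      obtain ⟨j, hj, hj0⟩ := v.2 i (by omega)
      exact ⟨j, hj, by have := hdown j; omega⟩
    · have hvk : (v.1 k : ℕ) = a := by
        have := hdown k
        have : (v.1 k : ℕ) ≤ a := Fin.is_le _
        omega
      have := v.val_eq_zero_of_succ_eq hk hvk
      omega
    all_goals simp only [Nat.dist]; omega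

theorem dist_eq_l1Dist (u v : MetallicVertex a n) : (metallicCube a n).dist u v = u.l1Dist v :=
  (metallicCube a n).dist_eq_of_descent l1Dist_self
    (fun u w v h => by have := l1Dist_triangle u w v; rw [adj_iff.1 h] at this; omega)
    (fun _ _ h => exists_adj_l1Dist_lt h) u v

def letterBound (a : ℕ) {n : ℕ} (i : Fin n) : ℕ :=
  if (i : ℕ) = 0 then a - 1 else a

theorem sum_letterBound (a n : ℕ) : ∑ i : Fin n, letterBound a i = a * n - 1 := by
  cases n with
  | zero => simp
  | succ m =>
    simp only [Fin.sum_univ_succ, letterBound, Fin.val_zero, Fin.val_succ, if_true,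
      Nat.add_one_ne_zero, if_false, Finset.sum_const, Finset.card_univ, Fintype.card_fin,
      smul_eq_mul]
    rcases Nat.eq_zero_or_pos a with rfl | ha
    · simp
    · rw [Nat.mul_succ, Nat.mul_comm m a]
      omega

theorem val_le_letterBound (v : MetallicVertex a n) (i : Fin n) :
    (v.1 i : ℕ) ≤ letterBound a i := by
  have hle : (v.1 i : ℕ) ≤ a := Fin.is_le _
  unfold letterBound
  split_ifs with hi
  · have : (v.1 i : ℕ) ≠ a := fun h => by obtain ⟨j, hj, -⟩ := v.2 i h; omega
    omega
  · exact hle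

theorem dist_le_letterBound (u v : MetallicVertex a n) (i : Fin n) :
    Nat.dist (u.1 i) (v.1 i) ≤ letterBound a i := by
  have := u.val_le_letterBound i
  have := v.val_le_letterBound i
  simp only [Nat.dist]
  omega

theorem l1Dist_le (u v : MetallicVertex a n) : u.l1Dist v ≤ a * n - 1 :=
  sum_letterBound a n ▸ Finset.sum_le_sum fun i _ => dist_le_letterBound u v i

theorem l1Dist_eq_iff {u v : MetallicVertex a n} :
    u.l1Dist v = a * n - 1 ↔ ∀ i, Nat.dist (u.1 i) (v.1 i) = letterBound a i := by
  rw [l1Dist, ← sum_letterBound a n,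
    Finset.sum_eq_sum_iff_of_le fun i _ => dist_le_letterBound u v i]
  simp

theorem l1Dist_periph₁_periph₂ (ha : 1 ≤ a) :
    (periph₁ a n ha).l1Dist (periph₂ a n ha) = a * n - 1 := by
  refine l1Dist_eq_iff.2 fun i => ?_
  rw [periph₁_val, periph₂_val]
  simp only [letterBound, Nat.dist]
  split_ifs <;> omega

theorem val_periph_or_swap (ha : 1 ≤ a) {u v : MetallicVertex a n}
    (hext : ∀ i, Nat.dist (u.1 i) (v.1 i) = letterBound a i) (i : Fin n) :
    ((u.1 i : ℕ) = (periph₁ a n ha).1 i ∧ (v.1 i : ℕ) = (periph₂ a n ha).1 i) ∨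
      ((u.1 i : ℕ) = (periph₂ a n ha).1 i ∧ (v.1 i : ℕ) = (periph₁ a n ha).1 i) := by
  have hu := u.val_le_letterBound i
  have hv := v.val_le_letterBound i
  have hd := hext i
  rw [periph₁_val, periph₂_val]
  simp only [letterBound, Nat.dist] at *
  split_ifs at * <;> omega

theorem val_periph_castSucc {m : ℕ} (ha : 1 ≤ a) {u v : MetallicVertex a (m + 1)}
    (hext : ∀ i, Nat.dist (u.1 i) (v.1 i) = letterBound a i) (i : Fin m)
    (h : (u.1 i.succ : ℕ) = (periph₁ a _ ha).1 i.succ ∧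
      (v.1 i.succ : ℕ) = (periph₂ a _ ha).1 i.succ) :
    (u.1 i.castSucc : ℕ) = (periph₁ a _ ha).1 i.castSucc ∧
      (v.1 i.castSucc : ℕ) = (periph₂ a _ ha).1 i.castSucc := by
  have hsucc : (i.castSucc : ℕ) + 1 = i.succ := by simp
  have hu := u.val_eq_zero_of_succ_eq hsucc
  have hv := v.val_eq_zero_of_succ_eq hsucc
  have hpair := val_periph_or_swap ha hext i.castSucc
  rw [periph₁_val, periph₂_val] at h hpair ⊢
  simp only [Fin.val_succ, Fin.val_castSucc] at *
  split_ifs at * <;> omega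

theorem eq_periph_of_val_last {m : ℕ} (ha : 1 ≤ a) {u v : MetallicVertex a (m + 1)}
    (hext : ∀ i, Nat.dist (u.1 i) (v.1 i) = letterBound a i)
    (hlast : (u.1 (Fin.last m) : ℕ) = (periph₁ a _ ha).1 (Fin.last m) ∧
      (v.1 (Fin.last m) : ℕ) = (periph₂ a _ ha).1 (Fin.last m)) :
    u = periph₁ a _ ha ∧ v = periph₂ a _ ha := by
  have hall := fun i => Fin.reverseInduction (motive := fun i => (u.1 i : ℕ) =
    (periph₁ a _ ha).1 i ∧ (v.1 i : ℕ) = (periph₂ a _ ha).1 i) hlast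
    (val_periph_castSucc ha hext) i
  exact ⟨Subtype.ext (funext fun i => Fin.ext (hall i).1),
    Subtype.ext (funext fun i => Fin.ext (hall i).2)⟩

theorem l1Dist_eq_iff_periph (ha : 1 ≤ a) {u v : MetallicVertex a n} :
    u.l1Dist v = a * n - 1 ↔
      (u = periph₁ a n ha ∧ v = periph₂ a n ha) ∨ (u = periph₂ a n ha ∧ v = periph₁ a n ha) := by
  refine ⟨fun h => ?_, ?_⟩
  · rw [l1Dist_eq_iff] at h
    cases n with
    | zero => exact Or.inl ⟨Subsingleton.elim _ _, Subsingleton.elim _ _⟩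
    | succ m =>
      rcases val_periph_or_swap ha h (Fin.last m) with hlast | hlast
      · exact Or.inl (eq_periph_of_val_last ha h hlast)
      · have h' : ∀ i, Nat.dist (v.1 i) (u.1 i) = letterBound a i :=
          fun i => Nat.dist_comm (u.1 i : ℕ) _ ▸ h i
        exact Or.inr (eq_periph_of_val_last ha h' hlast.symm).symm
  · rintro (⟨rfl, rfl⟩ | ⟨rfl, rfl⟩)
    · exact l1Dist_periph₁_periph₂ ha
    · rw [l1Dist_comm]
      exact l1Dist_periph₁_periph₂ ha

end MetallicVertex

theorem ecc_eq_iff_exists_l1Dist_eq {a n : ℕ} (v : MetallicVertex a n) :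
    ecc a n v = a * n - 1 ↔ ∃ u, v.l1Dist u = a * n - 1 := by
  simp only [ecc, MetallicVertex.dist_eq_l1Dist]
  constructor
  · intro h
    obtain ⟨u, -, hu⟩ :=
      Finset.exists_mem_eq_sup Finset.univ ⟨v, Finset.mem_univ v⟩ v.l1Dist
    exact ⟨u, hu ▸ h⟩
  · rintro ⟨u, hu⟩
    exact le_antisymm (Finset.sup_le fun w _ => v.l1Dist_le w)
      (hu ▸ Finset.le_sup (f := v.l1Dist) (Finset.mem_univ u))

theorem metallic_diameter_periphery_general (a n : ℕ) (ha : 1 ≤ a) :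
    (∀ u v : MetallicVertex a n, (metallicCube a n).dist u v ≤ a * n - 1) ∧
    (∀ v : MetallicVertex a n,
      ecc a n v = a * n - 1 ↔ (v = periph₁ a n ha ∨ v = periph₂ a n ha)) := by
  refine ⟨fun u v => (u.dist_eq_l1Dist v).symm ▸ u.l1Dist_le v, fun v => ?_⟩
  simp only [ecc_eq_iff_exists_l1Dist_eq, MetallicVertex.l1Dist_eq_iff_periph ha]
  constructor
  · rintro ⟨u, ⟨hv, -⟩ | ⟨hv, -⟩⟩
    exacts [Or.inl hv, Or.inr hv]
  · rintro (hv | hv)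
    exacts [⟨_, Or.inl ⟨hv, rfl⟩⟩, ⟨_, Or.inr ⟨hv, rfl⟩⟩]

/-- the diameter of `Π^a_n` equals `a·n − 1`, and the periphery
consists of the two vertices `0a0a⋯` and `(a−1)0a0a⋯`. -/
theorem metallic_diameter_periphery (a n : ℕ) (ha : 1 ≤ a) (hn : 1 ≤ n) :
    (∀ u v : MetallicVertex a n, (metallicCube a n).dist u v ≤ a * n - 1) ∧
    (∀ v : MetallicVertex a n,
      ecc a n v = a * n - 1 ↔ (v = periph₁ a n ha ∨ v = periph₂ a n ha)) :=
  metallic_diameter_periphery_general a n ha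
end

section
/- For every integer a ≥ 1 and n ≥ 1, the metallic cube Π^a_n admits a perfect matching when its number of vertices is even, and a matching covering all but exactly one vertex (a semi-perfect/near-perfect matching) when its number of vertices is odd. -/
/-!
The matching comes from an involution of the vertex set that moves every vertex to a neighbour
and fixes at most one vertex: its two-element orbits form a matching, and the number of fixed
points has the parity of the number of vertices.

The involution changes one letter of a word by one, scanning from the end. A letter whose
predecessor is `0` ranges over `[l, a]`, any other over `[l, a - 1]`, where the lower bound `l` is
`0` at the start. Within that range the letters are paired as `{l, l+1}, {l+2, l+3}, …`; if the
last letter is the one left over, the top of its range, it is frozen and the scan moves on. When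
the top is `a`, the preceding `0` is frozen too; otherwise the preceding letter must stay
nonzero, so the scan continues with `l = 1`. In a fixed word every letter is frozen, hence forced:
it is the top of its range, whose parity is prescribed, and `a`, `a - 1` differ in parity.
-/

open Finset Function

theorem Function.Involutive.card_modEq_card_fixedPoints {V : Type*} [Fintype V] [DecidableEq V]
    {f : V → V} (hf : Involutive f) : Fintype.card V ≡ Fintype.card (fixedPoints f) [MOD 2] :=
  haveI := Fact.mk Nat.prime_two
  Equiv.Perm.card_fixedPoints_modEq (f := (f : Function.End V)) (n := 1) (funext hf)

namespace SimpleGraph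

variable {V : Type*} {G : SimpleGraph V} {f : V → V}

def Subgraph.ofInvolutive (hf : Involutive f) (hadj : ∀ v, f v ≠ v → G.Adj v (f v)) :
    G.Subgraph where
  verts := {v | f v ≠ v}
  Adj u v := f u = v ∧ u ≠ v
  adj_sub := by
    rintro u _ ⟨rfl, hu⟩
    exact hadj u (Ne.symm hu)
  edge_vert := by
    rintro u _ ⟨rfl, hu⟩
    exact Ne.symm hu
  symm := ⟨by
    rintro u _ ⟨rfl, hu⟩
    exact ⟨hf u, Ne.symm hu⟩⟩

theorem Subgraph.isMatching_ofInvolutive (hf : Involutive f)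
    (hadj : ∀ v, f v ≠ v → G.Adj v (f v)) : (Subgraph.ofInvolutive hf hadj).IsMatching :=
  fun v hv => ⟨f v, ⟨rfl, Ne.symm hv⟩, fun _ hw => hw.1.symm⟩

theorem Subgraph.verts_ofInvolutive (hf : Involutive f)
    (hadj : ∀ v, f v ≠ v → G.Adj v (f v)) :
    (Subgraph.ofInvolutive hf hadj).verts = (fixedPoints f)ᶜ :=
  rfl

theorem exists_matching_of_involutive [Fintype V] (hf : Involutive f)
    (hadj : ∀ v, f v ≠ v → G.Adj v (f v)) (hfix : (fixedPoints f).Subsingleton) :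
    (Even (Fintype.card V) → ∃ M : G.Subgraph, M.IsPerfectMatching) ∧
    (¬ Even (Fintype.card V) →
      ∃ (M : G.Subgraph) (v : V), M.IsMatching ∧ M.verts = {v}ᶜ) := by
  classical
  have hmod : Fintype.card V % 2 = Fintype.card (fixedPoints f) % 2 :=
    hf.card_modEq_card_fixedPoints
  have hle : Fintype.card (fixedPoints f) ≤ 1 :=
    Fintype.card_le_one_iff_subsingleton.mpr hfix.coe_sort
  have hM := Subgraph.isMatching_ofInvolutive hf hadj (G := G)
  refine ⟨fun heven => ⟨_, hM, fun v hv => ?_⟩, fun hodd => ?_⟩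
  · have hempty : Fintype.card (fixedPoints f) = 0 := by rw [Nat.even_iff] at heven; omega
    exact (Fintype.card_eq_zero_iff.mp hempty).false ⟨v, hv⟩
  · obtain ⟨v, hv⟩ : (fixedPoints f).Nonempty := Set.nonempty_coe_sort.mp <|
      Fintype.card_pos_iff.mp (by rw [Nat.not_even_iff] at hodd; omega)
    exact ⟨_, v, hM, by rw [Subgraph.verts_ofInvolutive, hfix.eq_singleton_of_mem hv]⟩

end SimpleGraph

namespace Metallic

variable {a l k : ℕ} {x y : ℕ → ℕ}

abbrev FollowsZero (x : ℕ → ℕ) (k : ℕ) : Prop := 0 < k ∧ x (k - 1) = 0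

def maxLetter (a : ℕ) (x : ℕ → ℕ) (k : ℕ) : ℕ := if FollowsZero x k then a else a - 1

def IsMetallic (a : ℕ) (x : ℕ → ℕ) (k : ℕ) : Prop := ∀ i < k, x i ≤ maxLetter a x i

/-- `v` is the letter of `[l, t]` left over by the pairing `{l, l+1}, {l+2, l+3}, …`. -/
abbrev Unpaired (l t v : ℕ) : Prop := v = t ∧ t % 2 = l % 2

def flipLetter (l v : ℕ) : ℕ := if v % 2 = l % 2 then v + 1 else v - 1

/-- `partner a l k x` acts on the word `x 0 ⋯ x (k - 1)`, whose last letter is at least `l`. -/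
def partner (a : ℕ) : ℕ → ℕ → (ℕ → ℕ) → ℕ → ℕ
  | _, 0, x => x
  | l, k + 1, x =>
    if Unpaired l (maxLetter a x k) (x k) then
      if FollowsZero x k then partner a 0 (k - 1) x else partner a 1 k x
    else update x k (flipLetter l (x k))

theorem followsZero_congr (h : 0 < k → x (k - 1) = y (k - 1)) :
    FollowsZero x k ↔ FollowsZero y k :=
  and_congr_right fun hk => by rw [h hk]

theorem maxLetter_congr (h : FollowsZero x k ↔ FollowsZero y k) :
    maxLetter a x k = maxLetter a y k := by
  simp only [maxLetter, h]

theorem maxLetter_le : maxLetter a x k ≤ a := by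
  unfold maxLetter; split_ifs <;> omega

theorem maxLetter_eq_self_iff (ha : 1 ≤ a) : maxLetter a x k = a ↔ FollowsZero x k := by
  unfold maxLetter
  split_ifs with h
  · exact iff_of_true rfl h
  · exact iff_of_false (by omega) h

theorem maxLetter_eq_of_unpaired (ha : 1 ≤ a) (hx : Unpaired l (maxLetter a x k) v)
    (hy : Unpaired l (maxLetter a y k) w) : maxLetter a x k = maxLetter a y k := by
  unfold maxLetter at *; split_ifs at * <;> omega

theorem le_maxLetter_iff (ha : 1 ≤ a) {v : ℕ} (hv : v ≤ a) :
    v ≤ maxLetter a x k ↔ (v = a → FollowsZero x k) := by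
  unfold maxLetter
  split_ifs with h
  · exact iff_of_true hv fun _ => h
  · exact ⟨fun h' h'' => by omega, fun h' => by have := mt h' h; omega⟩

theorem isMetallic_congr (h : ∀ i < k, x i = y i) : IsMetallic a x k ↔ IsMetallic a y k := by
  refine forall₂_congr fun i hi => ?_
  rw [h i hi, maxLetter_congr (followsZero_congr fun _ => h (i - 1) (by omega))]

theorem isMetallic_succ : IsMetallic a x (k + 1) ↔ IsMetallic a x k ∧ x k ≤ maxLetter a x k :=
  Nat.forall_lt_succ_right

theorem IsMetallic.mono {j : ℕ} (hx : IsMetallic a x k) (hjk : j ≤ k) : IsMetallic a x j :=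
  fun i hi => hx i (by omega)

section flipLetter

variable {v t : ℕ}

theorem flipLetter_flipLetter (hv : l ≤ v) : flipLetter l (flipLetter l v) = v := by
  unfold flipLetter; split_ifs <;> omega

theorem dist_flipLetter (hv : l ≤ v) : Nat.dist v (flipLetter l v) = 1 := by
  unfold flipLetter Nat.dist; split_ifs <;> omega

theorem flipLetter_ne (hv : l ≤ v) : flipLetter l v ≠ v := by
  unfold flipLetter; split_ifs <;> omega

theorem le_flipLetter (hv : l ≤ v) : l ≤ flipLetter l v := by
  unfold flipLetter; split_ifs <;> omega

theorem flipLetter_le (hvt : v ≤ t) (hv : ¬ Unpaired l t v) : flipLetter l v ≤ t := by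
  unfold flipLetter; split_ifs <;> omega

theorem not_unpaired_flipLetter (hvt : v ≤ t) : ¬ Unpaired l t (flipLetter l v) := by
  unfold flipLetter; split_ifs <;> omega

end flipLetter

theorem partner_of_le {i : ℕ} (h : k ≤ i) : partner a l k x i = x i := by
  fun_induction partner a l k x with
  | case1 => rfl
  | case2 _ _ _ _ _ ih => exact ih (by omega)
  | case3 _ _ _ _ _ ih => exact ih (by omega)
  | case4 => exact update_of_ne (by omega) _ _

theorem le_partner (hl : 0 < k → l ≤ x (k - 1)) (hk : 0 < k) :
    l ≤ partner a l k x (k - 1) := by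
  fun_induction partner a l k x with
  | case1 => omega
  | case2 | case3 => rw [partner_of_le (by omega)]; exact hl hk
  | case4 => simpa using le_flipLetter (hl hk)

theorem followsZero_partner_pred : FollowsZero (partner a l (k - 1) x) k ↔ FollowsZero x k :=
  followsZero_congr fun _ => partner_of_le le_rfl

theorem one_le_of_not_followsZero (h : ¬ FollowsZero x k) : 0 < k → 1 ≤ x (k - 1) :=
  fun hk => Nat.one_le_iff_ne_zero.mpr (h ⟨hk, ·⟩)

theorem not_followsZero_partner_one (h : ¬ FollowsZero x k) :
    ¬ FollowsZero (partner a 1 k x) k := by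
  rintro ⟨hk, hzero⟩
  have := le_partner (a := a) (one_le_of_not_followsZero h) hk
  omega

theorem isMetallic_partner (hx : IsMetallic a x k) (hl : 0 < k → l ≤ x (k - 1)) :
    IsMetallic a (partner a l k x) k := by
  fun_induction partner a l k x with
  | case1 => exact hx
  | case2 l k x hstuck hzero ih =>
    intro i hi
    rcases Nat.lt_or_ge i (k - 1) with hi' | hi'
    · exact ih (hx.mono (by omega)) (fun _ => Nat.zero_le _) i hi'
    · rw [partner_of_le hi']
      obtain rfl | rfl : i = k - 1 ∨ i = k := by omega
      · rw [hzero.2]; exact Nat.zero_le _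
      · rw [maxLetter_congr followsZero_partner_pred]; exact hstuck.1.le
  | case3 l k x hstuck hzero ih =>
    refine isMetallic_succ.mpr ⟨ih (hx.mono (by omega)) (one_le_of_not_followsZero hzero), ?_⟩
    rw [partner_of_le le_rfl, maxLetter_congr
      (iff_of_false (not_followsZero_partner_one hzero) hzero)]
    exact hstuck.1.le
  | case4 l k x hflip =>
    have hxk := isMetallic_succ.mp hx
    refine isMetallic_succ.mpr ⟨(isMetallic_congr fun i hi => ?_).mp hxk.1, ?_⟩
    · exact (update_of_ne (by omega) _ _).symm
    · rw [update_self, maxLetter_congr (followsZero_congr fun _ => update_of_ne (by omega) _ _)]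
      exact flipLetter_le hxk.2 hflip

theorem partner_partner (hx : IsMetallic a x k) (hl : 0 < k → l ≤ x (k - 1)) :
    partner a l k (partner a l k x) = x := by
  fun_induction partner a l k x with
  | case1 => rw [partner]
  | case2 l k x hstuck hzero ih =>
    have hyk : partner a 0 (k - 1) x k = x k := partner_of_le (by omega)
    rw [partner, if_pos (by rwa [hyk, maxLetter_congr followsZero_partner_pred]),
      if_pos (followsZero_partner_pred.mpr hzero)]
    exact ih (hx.mono (by omega)) fun _ => Nat.zero_le _
  | case3 l k x hstuck hzero ih =>
    have hzero' := not_followsZero_partner_one (a := a) hzero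
    have hmax := maxLetter_congr (a := a) (iff_of_false hzero' hzero)
    rw [partner, if_pos (by rwa [partner_of_le le_rfl, hmax]), if_neg hzero']
    exact ih (hx.mono (by omega)) (one_le_of_not_followsZero hzero)
  | case4 l k x hflip =>
    have hxk := isMetallic_succ.mp hx
    have hlk : l ≤ x k := hl k.succ_pos
    have hmax : maxLetter a (update x k (flipLetter l (x k))) k = maxLetter a x k :=
      maxLetter_congr (followsZero_congr fun _ => update_of_ne (by omega) _ _)
    rw [partner, update_self, hmax, if_neg (not_unpaired_flipLetter hxk.2), update_idem,
      flipLetter_flipLetter hlk, update_eq_self]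

theorem sum_dist_partner {m : ℕ} (hkm : k ≤ m) (hl : 0 < k → l ≤ x (k - 1))
    (hne : partner a l k x ≠ x) : ∑ i ∈ range m, Nat.dist (x i) (partner a l k x i) = 1 := by
  fun_induction partner a l k x with
  | case1 => exact absurd rfl hne
  | case2 l k x _ _ ih => exact ih (by omega) (fun _ => Nat.zero_le _) hne
  | case3 l k x _ hzero ih => exact ih (by omega) (one_le_of_not_followsZero hzero) hne
  | case4 l k x _ =>
    rw [sum_eq_single_of_mem k (mem_range.mpr hkm) fun i _ hik => by
      rw [update_of_ne hik, Nat.dist_self], update_self]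
    exact dist_flipLetter (hl k.succ_pos)

theorem unpaired_of_partner_eq_self (hl : l ≤ x k) (h : partner a l (k + 1) x = x) :
    Unpaired l (maxLetter a x k) (x k) := by
  by_contra hflip
  rw [partner, if_neg hflip] at h
  exact flipLetter_ne hl (by simpa using congrFun h k)

theorem eq_of_partner_eq_self (ha : 1 ≤ a) (hlx : 0 < k → l ≤ x (k - 1))
    (hly : 0 < k → l ≤ y (k - 1)) (hx : partner a l k x = x) (hy : partner a l k y = y) :
    ∀ i < k, x i = y i := by
  fun_induction partner a l k x with
  | case1 => intro i hi; omega
  | case2 l k x hstuck hzero ih =>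
    have hstuck' : Unpaired l (maxLetter a y k) (y k) :=
      unpaired_of_partner_eq_self (hly k.succ_pos) hy
    have hmax := maxLetter_eq_of_unpaired ha hstuck hstuck'
    have hzero' : FollowsZero y k :=
      (maxLetter_eq_self_iff ha).mp (hmax ▸ (maxLetter_eq_self_iff ha).mpr hzero)
    rw [partner, if_pos hstuck', if_pos hzero'] at hy
    intro i hi
    rcases Nat.lt_or_ge i (k - 1) with hi' | hi'
    · exact ih (fun _ => Nat.zero_le _) (fun _ => Nat.zero_le _) hx hy i hi'
    · obtain rfl | rfl : i = k - 1 ∨ i = k := by omega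
      · rw [hzero.2, hzero'.2]
      · rw [hstuck.1, hstuck'.1, hmax]
  | case3 l k x hstuck hzero ih =>
    have hstuck' : Unpaired l (maxLetter a y k) (y k) :=
      unpaired_of_partner_eq_self (hly k.succ_pos) hy
    have hmax := maxLetter_eq_of_unpaired ha hstuck hstuck'
    have hzero' : ¬ FollowsZero y k :=
      fun h => hzero ((maxLetter_eq_self_iff ha).mp (hmax ▸ (maxLetter_eq_self_iff ha).mpr h))
    rw [partner, if_pos hstuck', if_neg hzero'] at hy
    intro i hi
    rcases Nat.lt_or_ge i k with hi' | hi'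
    · exact ih (one_le_of_not_followsZero hzero) (one_le_of_not_followsZero hzero') hx hy i hi'
    · obtain rfl : i = k := by omega
      rw [hstuck.1, hstuck'.1, hmax]
  | case4 l k x _ =>
    exact absurd (by simpa using congrFun hx k) (flipLetter_ne (hlx k.succ_pos))

variable {n : ℕ}

def toSeq (α : Fin n → Fin (a + 1)) : ℕ → ℕ :=
  fun i => if h : i < n then α ⟨i, h⟩ else 0

theorem toSeq_coe (α : Fin n → Fin (a + 1)) (i : Fin n) : toSeq α i = α i := by
  simp [toSeq]

theorem toSeq_of_le (α : Fin n → Fin (a + 1)) {i : ℕ} (hi : n ≤ i) : toSeq α i = 0 := by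
  simp [toSeq, hi]

theorem eq_of_toSeq {α β : Fin n → Fin (a + 1)} (h : ∀ i < n, toSeq α i = toSeq β i) :
    α = β :=
  funext fun i => Fin.ext <| by simpa only [toSeq_coe] using h i i.2

theorem followsZero_toSeq_iff (α : Fin n → Fin (a + 1)) (i : Fin n) :
    FollowsZero (toSeq α) i ↔ ∃ j : Fin n, (j : ℕ) + 1 = i ∧ (α j : ℕ) = 0 := by
  constructor
  · rintro ⟨hi, hzero⟩
    exact ⟨⟨i - 1, by omega⟩, by simp only; omega, by rw [← toSeq_coe]; exact hzero⟩
  · rintro ⟨j, hj, hzero⟩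
    have hij : (i : ℕ) - 1 = j := by omega
    exact ⟨by omega, by rw [hij, toSeq_coe, hzero]⟩

theorem metallicOK_iff_isMetallic (ha : 1 ≤ a) (α : Fin n → Fin (a + 1)) :
    MetallicOK a n α ↔ IsMetallic a (toSeq α) n := by
  have hletter (i : Fin n) : toSeq α i ≤ maxLetter a (toSeq α) i ↔
      ((α i : ℕ) = a → ∃ j : Fin n, (j : ℕ) + 1 = i ∧ (α j : ℕ) = 0) := by
    rw [toSeq_coe, le_maxLetter_iff ha (Fin.is_le _), followsZero_toSeq_iff]
  exact ⟨fun h i hi => (hletter ⟨i, hi⟩).mpr (h _), fun h i => (hletter i).mp (h i i.2)⟩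

def ofSeq (x : ℕ → ℕ) (hx : ∀ i < n, x i ≤ a) : Fin n → Fin (a + 1) :=
  fun i => ⟨x i, Nat.lt_succ_of_le (hx i i.2)⟩

theorem toSeq_ofSeq (hx : ∀ i < n, x i ≤ a) (hx₀ : ∀ i, n ≤ i → x i = 0) :
    toSeq (ofSeq x hx) = x := by
  funext i
  by_cases hi : i < n
  · simp [toSeq, ofSeq, hi]
  · simp [toSeq, hi, hx₀ i (by omega)]

theorem isMetallic_partner_toSeq (ha : 1 ≤ a) (α : MetallicVertex a n) :
    IsMetallic a (partner a 0 n (toSeq α.1)) n :=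
  isMetallic_partner ((metallicOK_iff_isMetallic ha α.1).mp α.2) fun _ => Nat.zero_le _

theorem partner_toSeq_of_le (α : Fin n → Fin (a + 1)) {i : ℕ} (hi : n ≤ i) :
    partner a l n (toSeq α) i = 0 := by
  rw [partner_of_le hi, toSeq_of_le α hi]

theorem partner_toSeq_le (ha : 1 ≤ a) (α : MetallicVertex a n) :
    ∀ i < n, partner a 0 n (toSeq α.1) i ≤ a :=
  fun i hi => (isMetallic_partner_toSeq ha α i hi).trans maxLetter_le

def partnerVertex (ha : 1 ≤ a) (α : MetallicVertex a n) : MetallicVertex a n :=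
  ⟨ofSeq _ (partner_toSeq_le ha α), by
    rw [metallicOK_iff_isMetallic ha, toSeq_ofSeq _ fun _ => partner_toSeq_of_le α.1]
    exact isMetallic_partner_toSeq ha α⟩

theorem toSeq_partnerVertex (ha : 1 ≤ a) (α : MetallicVertex a n) :
    toSeq (partnerVertex ha α).1 = partner a 0 n (toSeq α.1) :=
  toSeq_ofSeq (partner_toSeq_le ha α) fun _ => partner_toSeq_of_le α.1

theorem partnerVertex_involutive (ha : 1 ≤ a) : Involutive (partnerVertex (n := n) ha) := by
  intro α
  refine Subtype.ext (eq_of_toSeq fun i _ => ?_)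
  rw [toSeq_partnerVertex, toSeq_partnerVertex,
    partner_partner ((metallicOK_iff_isMetallic ha α.1).mp α.2) fun _ => Nat.zero_le _]

theorem partner_toSeq_ne (ha : 1 ≤ a) {α : MetallicVertex a n} (h : partnerVertex ha α ≠ α) :
    partner a 0 n (toSeq α.1) ≠ toSeq α.1 := fun h' =>
  h (Subtype.ext (eq_of_toSeq fun i _ => by rw [toSeq_partnerVertex, h']))

theorem metallicCube_adj_partnerVertex (ha : 1 ≤ a) (α : MetallicVertex a n)
    (h : partnerVertex ha α ≠ α) : (metallicCube a n).Adj α (partnerVertex ha α) := by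
  change ∑ i : Fin n, Nat.dist (α.1 i : ℕ) ((partnerVertex ha α).1 i : ℕ) = 1
  simp only [← toSeq_coe]
  rw [Fin.sum_univ_eq_sum_range fun i => Nat.dist (toSeq α.1 i) (toSeq (partnerVertex ha α).1 i),
    toSeq_partnerVertex]
  exact sum_dist_partner le_rfl (fun _ => Nat.zero_le _) (partner_toSeq_ne ha h)

theorem fixedPoints_partnerVertex_subsingleton (ha : 1 ≤ a) :
    (fixedPoints (partnerVertex (n := n) ha)).Subsingleton := by
  intro α (hα : partnerVertex ha α = α) β (hβ : partnerVertex ha β = β)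
  refine Subtype.ext (eq_of_toSeq (eq_of_partner_eq_self ha (l := 0) (fun _ => Nat.zero_le _)
    (fun _ => Nat.zero_le _) ?_ ?_))
  · rw [← toSeq_partnerVertex ha, hα]
  · rw [← toSeq_partnerVertex ha, hβ]

end Metallic

theorem metallic_matching_general (a n : ℕ) (ha : 1 ≤ a) :
    (Even (Fintype.card (MetallicVertex a n)) →
      ∃ M : (metallicCube a n).Subgraph, M.IsPerfectMatching) ∧
    (¬ Even (Fintype.card (MetallicVertex a n)) →
      ∃ (M : (metallicCube a n).Subgraph) (v : MetallicVertex a n),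
        M.IsMatching ∧ M.verts = {v}ᶜ) :=
  SimpleGraph.exists_matching_of_involutive (Metallic.partnerVertex_involutive ha)
    (Metallic.metallicCube_adj_partnerVertex ha)
    (Metallic.fixedPoints_partnerVertex_subsingleton ha)

/-- `Π^a_n` admits a perfect matching when its number of vertices is
even, and a matching covering all but exactly one vertex when it is odd. -/
theorem metallic_matching (a n : ℕ) (ha : 1 ≤ a) (hn : 1 ≤ n) :
    (Even (Fintype.card (MetallicVertex a n)) →
      ∃ M : (metallicCube a n).Subgraph, M.IsPerfectMatching) ∧
    (¬ Even (Fintype.card (MetallicVertex a n)) →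
      ∃ (M : (metallicCube a n).Subgraph) (v : MetallicVertex a n),
        M.IsMatching ∧ M.verts = {v}ᶜ) :=
  metallic_matching_general a n ha
end

section
/- For every even integer a ≥ 2 and every odd integer n ≥ 3, the metallic cube Π^a_n is Hamiltonian, i.e., it contains a cycle visiting every vertex exactly once. -/
/-!
Let `Π_m` be the metallic strings of length `m` and `Λ_m` those that may also begin with `a`
(the tails `w` of strings `0w`); adjacency is distance one. Splitting off the first letter,
`Π_{m+1} = 0Λ_m ∪ 1Π_m ∪ ⋯ ∪ (a-1)Π_m` and `Λ_{m+1} = Π_{m+1} ∪ aΠ_m`.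

By induction on `m` one builds Hamiltonian paths `P_m` of `Π_m` and `L_m` of `Λ_m` that end at
the same string and, for even `m`, also start at the same string: `P_{m+1}` snakes through the
copies `(a-1)P_m, …, 1P_m` and finishes with `0L_m`, and `L_{m+1}` first runs through the extra
copy `aP_m`. When `m + 1` is even, the copies `aP_m` and `(a-1)P_m` are instead swept together in
a zigzag, so that `L_{m+1}` starts where `P_{m+1}` does; this needs `|P_m|` even, which holds for
odd `m` because `a` is even.

For odd `n = m + 1` write `P_m = Q y` and let `h` be the common first string of `P_m` and `L_m`.
The Hamiltonian cycle of `Π_n` runs along `0L_m` from `0h` to `0y`, along the row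
`1y, …, (a-1)y`, and back through the copies `(a-1)Q, …, 1Q` to `1h`, which is adjacent to `0h`.
-/

open List

structure IsHamPath {α : Type*} (R : α → α → Prop) (S : Set α) (l : List α) : Prop where
  isChain : l.IsChain R
  nodup : l.Nodup
  mem_iff : ∀ x, x ∈ l ↔ x ∈ S

namespace IsHamPath

variable {α β : Type*} {R : α → α → Prop} {S T : Set α} {l l₁ l₂ : List α}

theorem append (h₁ : IsHamPath R S l₁) (h₂ : IsHamPath R T l₂) (hST : Disjoint S T)
    (hlink : ∀ x ∈ l₁.getLast?, ∀ y ∈ l₂.head?, R x y) :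
    IsHamPath R (S ∪ T) (l₁ ++ l₂) where
  isChain := isChain_append.2 ⟨h₁.isChain, h₂.isChain, hlink⟩
  nodup := h₁.nodup.append h₂.nodup fun x hx₁ hx₂ =>
    hST.ne_of_mem ((h₁.mem_iff x).1 hx₁) ((h₂.mem_iff x).1 hx₂) rfl
  mem_iff x := by simp [h₁.mem_iff, h₂.mem_iff]

theorem reverse (h : IsHamPath R S l) (hR : ∀ ⦃x y⦄, R x y → R y x) :
    IsHamPath R S l.reverse where
  isChain := isChain_reverse.2 (h.isChain.imp fun _ _ hxy => hR hxy)
  nodup := nodup_reverse.2 h.nodup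
  mem_iff x := by simp [h.mem_iff]

theorem map {R' : β → β → Prop} (h : IsHamPath R S l) {f : α → β}
    (hf : Function.Injective f) (hR : ∀ x y, R x y → R' (f x) (f y)) :
    IsHamPath R' (f '' S) (l.map f) where
  isChain := isChain_map_of_isChain f hR h.isChain
  nodup := h.nodup.map hf
  mem_iff y := by simp [h.mem_iff]

theorem setOf_mem_eq (h : IsHamPath R S l) : {x | x ∈ l} = S :=
  Set.ext h.mem_iff

theorem ne_nil (h : IsHamPath R S l) (hS : S.Nonempty) : l ≠ [] := by
  rintro rfl
  obtain ⟨x, hx⟩ := hS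
  simpa using (h.mem_iff x).2 hx

end IsHamPath

namespace SimpleGraph

variable {V W : Type*} [Fintype V] [DecidableEq V] {G : SimpleGraph V} {H : SimpleGraph W}

theorem isHamiltonian_of_isHamPath {l : List V} (hl : IsHamPath G.Adj Set.univ l)
    (hlen : 3 ≤ l.length) (hclose : ∀ x ∈ l.getLast?, ∀ y ∈ l.head?, G.Adj x y) :
    G.IsHamiltonian := by
  obtain ⟨u, t, rfl⟩ : ∃ u t, l = u :: t := exists_cons_of_length_pos (by omega)
  have hchain : (u :: (t ++ [u])).IsChain G.Adj := by
    rw [← cons_append]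
    exact isChain_append.2
      ⟨hl.isChain, .singleton _, fun x hx y hy => hclose x hx y (by simpa using hy)⟩
  obtain ⟨p, hsupp⟩ : ∃ p : G.Walk u u, p.support = u :: (t ++ [u]) :=
    ⟨(Walk.ofSupport _ (cons_ne_nil _ _) hchain).copy (head_cons ..) (by simp),
      by rw [Walk.support_copy, Walk.support_ofSupport]⟩
  have hnil : ¬ p.Nil := by
    rw [Walk.nil_iff_support_eq, hsupp]
    simp
  have htail : p.tail.support = t ++ [u] := by
    rw [Walk.support_tail_of_not_nil _ hnil, hsupp, tail_cons]
  have hperm := perm_append_singleton u t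
  have hnodup : (t ++ [u]).Nodup := hperm.nodup_iff.2 hl.nodup
  have hcycle : p.IsCycle := by
    refine Walk.isCycle_iff_isPath_tail_and_le_length.2
      ⟨(Walk.isPath_def _).2 (htail ▸ hnodup), ?_⟩
    have := p.length_support
    rw [hsupp] at this
    simp only [length_cons, length_append] at this hlen
    omega
  refine fun _ => ⟨u, p, Walk.isHamiltonianCycle_isCycle_and_isHamiltonian_tail.2
    ⟨hcycle, fun v => ?_⟩⟩
  rw [htail]
  exact count_eq_one_of_mem hnodup (hperm.mem_iff.2 ((hl.mem_iff v).2 trivial))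

theorem Embedding.isHamiltonian (f : G ↪g H) {l : List W}
    (hl : IsHamPath H.Adj (Set.range f) l) (hlen : 3 ≤ l.length)
    (hclose : ∀ x ∈ l.getLast?, ∀ y ∈ l.head?, H.Adj x y) : G.IsHamiltonian := by
  obtain ⟨l, rfl⟩ : l ∈ Set.range (List.map f) := by
    rw [Set.range_list_map]
    exact fun x hx => (hl.mem_iff x).1 hx
  refine isHamiltonian_of_isHamPath ⟨?_, hl.nodup.of_map f, fun v => ?_⟩
    (by simpa using hlen) ?_
  · exact (isChain_map f).1 hl.isChain |>.imp fun x y => f.map_adj_iff.1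
  · simpa using (hl.mem_iff (f v)).2 ⟨v, rfl⟩
  · intro x hx y hy
    exact f.map_adj_iff.1 (hclose (f x) (getLast?_map ▸ Option.mem_map_of_mem f hx) (f y)
      (head?_map ▸ Option.mem_map_of_mem f hy))

end SimpleGraph

theorem List.zipWith_ofFn {α β γ : Type*} {n : ℕ} (f : α → β → γ) (u : Fin n → α)
    (v : Fin n → β) : zipWith f (ofFn u) (ofFn v) = ofFn fun i => f (u i) (v i) := by
  apply ext_getElem <;> simp

namespace Metallic

def stringGraph : SimpleGraph (List ℕ) where
  Adj u v := (zipWith Nat.dist u v).sum = 1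
  symm := ⟨fun u v h => by rwa [zipWith_comm_of_comm Nat.dist_comm]⟩
  loopless := ⟨fun u h => by simp at h⟩

local notation "Adj" => stringGraph.Adj

theorem stringGraph_adj_cons_cons_self {b : ℕ} {u v : List ℕ} :
    Adj (b :: u) (b :: v) ↔ Adj u v := by
  simp [stringGraph]

theorem stringGraph_adj_succ_cons (b : ℕ) (u : List ℕ) : Adj ((b + 1) :: u) (b :: u) := by
  simp [stringGraph, Nat.dist]

theorem stringGraph_adj_cons_succ (b : ℕ) (u : List ℕ) : Adj (b :: u) ((b + 1) :: u) :=
  (stringGraph_adj_succ_cons b u).symm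

theorem forall_adj_map_cons {o : Option (List ℕ)} {b c : ℕ} (h : ∀ u, Adj (b :: u) (c :: u)) :
    ∀ x ∈ o.map (b :: ·), ∀ y ∈ o.map (c :: ·), Adj x y := by
  rintro _ hx _ hy
  obtain ⟨u, hu, rfl⟩ := Option.mem_map.1 hx
  obtain ⟨v, hv, rfl⟩ := Option.mem_map.1 hy
  cases Option.mem_unique hu hv
  exact h u

def consUnion (B : Set ℕ) (F : ℕ → Set (List ℕ)) : Set (List ℕ) :=
  {w | ∃ b ∈ B, ∃ u ∈ F b, b :: u = w}

section consUnion

variable {B C : Set ℕ} {F G : ℕ → Set (List ℕ)}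

@[simp]
theorem cons_mem_consUnion {b : ℕ} {u : List ℕ} :
    b :: u ∈ consUnion B F ↔ b ∈ B ∧ u ∈ F b := by
  simp [consUnion]

@[simp]
theorem nil_notMem_consUnion : [] ∉ consUnion B F := by
  simp [consUnion]

theorem consUnion_union_consUnion : consUnion B F ∪ consUnion C F = consUnion (B ∪ C) F := by
  ext (_ | ⟨b, u⟩) <;> simp [or_and_right]

theorem consUnion_union_consUnion_right :
    consUnion B F ∪ consUnion B G = consUnion B fun b => F b ∪ G b := by
  ext (_ | ⟨b, u⟩) <;> simp [and_or_left]

theorem disjoint_consUnion (h : ∀ b ∈ B, b ∈ C → Disjoint (F b) (G b)) :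
    Disjoint (consUnion B F) (consUnion C G) := by
  refine Set.disjoint_left.2 fun w hB hC => ?_
  obtain ⟨b, hb, u, hu, rfl⟩ := hB
  obtain ⟨hbC, hu'⟩ := cons_mem_consUnion.1 hC
  exact (h b hb hbC).ne_of_mem hu hu' rfl

theorem image_cons_eq_consUnion (b : ℕ) (S : Set (List ℕ)) :
    (b :: ·) '' S = consUnion {b} fun _ => S := by
  ext (_ | ⟨c, u⟩) <;> simp [eq_comm, and_comm]

end consUnion

/-- The strings of length `m` over `{0, …, a}` that may follow the letter `p`: `a` occurs only
right after a `0`, counting `p` as the letter before the first one. So `follow a 1 m` is `Π^a_m`,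
and `follow a 0 m` is the set `Λ^a_m` of strings that may also begin with `a`. -/
def follow (a p m : ℕ) : Set (List ℕ) :=
  {w | w.length = m ∧ (∀ c ∈ w, c ≤ a) ∧ (p :: w).IsChain fun x y => y = a → x = 0}

variable {a : ℕ}

theorem follow_succ (p m : ℕ) :
    follow a p (m + 1) = consUnion {b | b ≤ a ∧ (b = a → p = 0)} (follow a · m) := by
  ext (_ | ⟨b, u⟩)
  · simp [follow]
  · simp [follow, isChain_cons_cons]
    tauto

theorem follow_eq_of_ne_zero {p : ℕ} (hp : p ≠ 0) (m : ℕ) : follow a p m = follow a 1 m := by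
  ext w
  simp only [follow, Set.mem_ofPred_eq, isChain_cons, hp, one_ne_zero]

theorem follow_one_succ (ha : a ≠ 0) (m : ℕ) :
    follow a 1 (m + 1) =
      consUnion (Set.Ioo 0 a) (fun _ => follow a 1 m) ∪ consUnion {0} fun _ => follow a 0 m := by
  ext (_ | ⟨b, u⟩)
  · simp [follow_succ]
  · rcases eq_or_ne b 0 with rfl | hb
    · simp [follow_succ, Nat.pos_of_ne_zero ha, Ne.symm ha]
    · simp [follow_succ, hb, follow_eq_of_ne_zero hb]
      omega

theorem follow_zero_succ (m : ℕ) :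
    follow a 0 (m + 1) =
      consUnion (Set.Ioc 0 a) (fun _ => follow a 1 m) ∪ consUnion {0} fun _ => follow a 0 m := by
  ext (_ | ⟨b, u⟩)
  · simp [follow_succ]
  · rcases eq_or_ne b 0 with rfl | hb
    · simp [follow_succ]
    · simp [follow_succ, hb, follow_eq_of_ne_zero hb]
      omega

theorem replicate_mem_follow {c : ℕ} (hc : c < a) (p m : ℕ) :
    replicate m c ∈ follow a p m := by
  refine ⟨length_replicate, fun x hx => (eq_of_mem_replicate hx).le.trans hc.le, ?_⟩
  induction m generalizing p with
  | zero => exact .singleton p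
  | succ m ih => exact isChain_cons_cons.2 ⟨fun h => absurd h hc.ne, ih c⟩

section toStrings

variable {n : ℕ}

theorem metallicOK_iff {α : Fin n → Fin (a + 1)} :
    MetallicOK a n α ↔ (1 :: ofFn fun i => (α i : ℕ)).IsChain fun x y => y = a → x = 0 := by
  rw [isChain_cons, isChain_ofFn]
  constructor
  · intro h
    refine ⟨fun y hy hya => ?_, fun i hi hia => ?_⟩
    · cases n with
      | zero => simp at hy
      | succ n =>
        simp only [ofFn_succ, head?_cons, Option.mem_def, Option.some.injEq] at hy
        obtain ⟨j, hj, -⟩ := h 0 (hy ▸ hya)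
        simp at hj
    · obtain ⟨j, hj, hj0⟩ := h ⟨i + 1, hi⟩ hia
      rwa [show j = ⟨i, by omega⟩ from Fin.ext (by simpa using hj)] at hj0
  · rintro ⟨hhead, hchain⟩ ⟨i, hi⟩ hia
    cases i with
    | zero =>
      cases n with
      | zero => omega
      | succ n => exact absurd (hhead _ (by simp [ofFn_succ]) hia) one_ne_zero
    | succ i => exact ⟨⟨i, by omega⟩, rfl, hchain i hi hia⟩

variable (a n) in
def toStrings : metallicCube a n ↪g stringGraph where
  toFun v := ofFn fun i => (v.1 i : ℕ)
  inj' u v h := Subtype.ext (funext fun i => Fin.ext (congrFun (ofFn_injective h) i))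
  map_rel_iff' {u v} := by
    change (zipWith Nat.dist (ofFn _) (ofFn _)).sum = 1 ↔ _
    rw [zipWith_ofFn, sum_ofFn]
    rfl

theorem range_toStrings : Set.range (toStrings a n) = follow a 1 n := by
  ext w
  constructor
  · rintro ⟨v, rfl⟩
    refine ⟨length_ofFn, fun c hc => ?_, metallicOK_iff.1 v.2⟩
    obtain ⟨i, rfl⟩ := mem_ofFn.1 hc
    exact Fin.is_le _
  · rintro ⟨rfl, hle, hchain⟩
    let α : Fin w.length → Fin (a + 1) := fun i =>
      ⟨w[i], Nat.lt_succ_of_le (hle _ (getElem_mem _))⟩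
    have hα : (ofFn fun i => (α i : ℕ)) = w := ofFn_getElem
    exact ⟨⟨α, metallicOK_iff.2 (hα.symm ▸ hchain)⟩, hα⟩

end toStrings

section column

variable {S : Set (List ℕ)} {l : List (List ℕ)}

theorem isHamPath_map_cons (h : IsHamPath Adj S l) (b : ℕ) :
    IsHamPath Adj (consUnion {b} fun _ => S) (l.map (b :: ·)) := by
  rw [← image_cons_eq_consUnion]
  exact h.map cons_injective fun _ _ => stringGraph_adj_cons_cons_self.2

/-- Traversed backwards for even `b`, so that consecutive copies meet at a common end of `l`. -/
def column (b : ℕ) (l : List (List ℕ)) : List (List ℕ) :=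
  (if Odd b then l else l.reverse).map (b :: ·)

theorem isHamPath_column (h : IsHamPath Adj S l) (b : ℕ) :
    IsHamPath Adj (consUnion {b} fun _ => S) (column b l) := by
  rw [column]
  split
  · exact isHamPath_map_cons h b
  · exact isHamPath_map_cons (h.reverse fun _ _ => .symm) b

theorem head?_column (b : ℕ) (l : List (List ℕ)) :
    (column b l).head? = (if Odd b then l.head? else l.getLast?).map (b :: ·) := by
  unfold column; split <;> simp [head?_map]

theorem getLast?_column (b : ℕ) (l : List (List ℕ)) :
    (column b l).getLast? = (if Odd b then l.getLast? else l.head?).map (b :: ·) := by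
  unfold column; split <;> simp [getLast?_map]

theorem length_column (b : ℕ) (l : List (List ℕ)) : (column b l).length = l.length := by
  unfold column; split <;> simp

theorem forall_adj_getLast?_column_head?_column (k : ℕ) (l : List (List ℕ)) :
    ∀ x ∈ (column (k + 1) l).getLast?, ∀ y ∈ (column k l).head?, Adj x y := by
  rw [getLast?_column, head?_column]
  by_cases hk : Odd k
  · simpa [Nat.odd_add_one, hk] using forall_adj_map_cons (stringGraph_adj_succ_cons k)
  · simpa [Nat.odd_add_one, hk] using forall_adj_map_cons (stringGraph_adj_succ_cons k)

def serpentine (l : List (List ℕ)) : ℕ → List (List ℕ)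
  | 0 => []
  | k + 1 => column (k + 1) l ++ serpentine l k

theorem length_serpentine (l : List (List ℕ)) (k : ℕ) :
    (serpentine l k).length = k * l.length := by
  induction k with
  | zero => simp [serpentine]
  | succ k ih => simp [serpentine, length_column, ih, Nat.succ_mul, Nat.add_comm]

section nonempty

variable (hl : l ≠ [])
include hl

theorem column_ne_nil (b : ℕ) : column b l ≠ [] := by
  simpa [← length_pos_iff, length_column] using hl

theorem serpentine_ne_nil (k : ℕ) : serpentine l (k + 1) ≠ [] :=
  append_ne_nil_of_left_ne_nil (column_ne_nil hl _) _

theorem head?_serpentine (k : ℕ) :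
    (serpentine l (k + 1)).head? = (column (k + 1) l).head? :=
  head?_append_of_ne_nil _ (column_ne_nil hl _)

theorem getLast?_serpentine (k : ℕ) :
    (serpentine l (k + 1)).getLast? = l.getLast?.map (1 :: ·) := by
  induction k with
  | zero => simp [serpentine, getLast?_column]
  | succ k ih => rw [serpentine, getLast?_append_of_ne_nil _ (serpentine_ne_nil hl k), ih]

theorem isHamPath_serpentine (h : IsHamPath Adj S l) (k : ℕ) :
    IsHamPath Adj (consUnion (Set.Ioc 0 k) fun _ => S) (serpentine l k) := by
  induction k with
  | zero => exact ⟨.nil, nodup_nil, fun w => by simp [serpentine, consUnion]⟩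
  | succ k ih =>
    have hB : {k + 1} ∪ Set.Ioc 0 k = Set.Ioc 0 (k + 1) := by ext; simp; omega
    rw [← hB, ← consUnion_union_consUnion]
    refine (isHamPath_column h _).append ih (disjoint_consUnion fun b hb hb' => by simp_all) ?_
    cases k with
    | zero => simp [serpentine]
    | succ k =>
      rw [head?_serpentine hl]
      exact forall_adj_getLast?_column_head?_column _ _

end nonempty

end column

def zigzag (c : ℕ) : List (List ℕ) → List (List ℕ)
  | u :: v :: l => [c :: u, (c + 1) :: u, (c + 1) :: v, c :: v] ++ zigzag c l
  | _ => []

section zigzag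

variable (c : ℕ)

theorem head?_zigzag : ∀ {l : List (List ℕ)}, Even l.length →
    (zigzag c l).head? = l.head?.map (c :: ·)
  | [], _ => rfl
  | [_], he => absurd he (by simp)
  | _ :: _ :: _, _ => rfl

theorem getLast?_zigzag : ∀ {l : List (List ℕ)}, Even l.length →
    (zigzag c l).getLast? = l.getLast?.map (c :: ·)
  | [], _ => rfl
  | [_], he => absurd he (by simp)
  | [_, _], _ => rfl
  | [_, _, _], he => absurd he (by simp; decide)
  | _ :: _ :: _ :: _ :: l, he => by
    rw [zigzag, getLast?_append_of_ne_nil _ (by simp [zigzag]),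
      getLast?_zigzag (by simpa [Nat.even_add_one] using he)]
    simp

theorem length_zigzag : ∀ {l : List (List ℕ)}, Even l.length →
    (zigzag c l).length = 2 * l.length
  | [], _ => rfl
  | [_], he => absurd he (by simp)
  | _ :: _ :: l, he => by
    simp [zigzag, length_zigzag (l := l) (by simpa [Nat.even_add_one] using he)]
    ring

theorem isHamPath_zigzag :
    ∀ {l : List (List ℕ)}, l.IsChain Adj → l.Nodup → Even l.length →
      IsHamPath Adj (consUnion {c, c + 1} fun _ => {u | u ∈ l}) (zigzag c l)
  | [], _, _, _ => ⟨.nil, nodup_nil, fun w => by simp [zigzag, consUnion]⟩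
  | [_], _, _, he => absurd he (by simp)
  | u :: v :: l, hc, hn, he => by
    have hl : Even l.length := by simpa [Nat.even_add_one] using he
    have huv : u ≠ v ∧ u ∉ l ∧ v ∉ l := by simp at hn; tauto
    have hblock : IsHamPath Adj (consUnion {c, c + 1} fun _ => {u, v})
        [c :: u, (c + 1) :: u, (c + 1) :: v, c :: v] := by
      refine ⟨?_, by simp [huv.1], ?_⟩
      · exact isChain_cons_cons.2 ⟨stringGraph_adj_cons_succ c u,
          isChain_cons_cons.2 ⟨stringGraph_adj_cons_cons_self.2 hc.rel,
            isChain_pair.2 (stringGraph_adj_succ_cons c v)⟩⟩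
      · rintro (_ | ⟨b, w⟩)
        · simp
        · simp only [mem_cons, cons.injEq, not_mem_nil, or_false, cons_mem_consUnion,
            Set.mem_insert_iff, Set.mem_singleton_iff]
          tauto
    have h := hblock.append (isHamPath_zigzag hc.of_cons.of_cons hn.of_cons.of_cons hl)
      (disjoint_consUnion fun _ _ _ => by simpa using huv.2) ?_
    · rw [consUnion_union_consUnion_right] at h
      convert h using 3
      · ext
        simp [or_assoc]
      · rfl
    · rw [head?_zigzag c hl]
      simp only [getLast?_cons_cons, getLast?_singleton, Option.mem_def, Option.some.injEq]
      rintro _ rfl y hy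
      obtain ⟨w, hw, rfl⟩ := Option.mem_map.1 hy
      exact stringGraph_adj_cons_cons_self.2 ((isChain_cons.1 hc.of_cons).1 w hw)

end zigzag

def snake (P L : List (List ℕ)) (k : ℕ) : List (List ℕ) :=
  serpentine P k ++ column 0 L

def cycle (L Q : List (List ℕ)) (y : List ℕ) (k : ℕ) : List (List ℕ) :=
  L.map (0 :: ·) ++ (serpentine [y] k).reverse ++ serpentine Q.reverse k

section snake

variable {S T : Set (List ℕ)} {P L : List (List ℕ)}

theorem isHamPath_snake (hP : IsHamPath Adj S P) (hPne : P ≠ []) (hL : IsHamPath Adj T L)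
    (hlast : L.getLast? = P.getLast?) (k : ℕ) :
    IsHamPath Adj (consUnion (Set.Ioc 0 k) (fun _ => S) ∪ consUnion {0} fun _ => T)
      (snake P L k) := by
  refine (isHamPath_serpentine hPne hP k).append (isHamPath_column hL 0)
    (disjoint_consUnion fun b hb hb' => by simp_all) ?_
  cases k with
  | zero => simp [serpentine]
  | succ k =>
    rw [getLast?_serpentine hPne, head?_column, if_neg (by simp), hlast]
    exact forall_adj_map_cons (stringGraph_adj_succ_cons 0)

theorem head?_snake (hPne : P ≠ []) (hlast : L.getLast? = P.getLast?) (k : ℕ) :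
    (snake P L k).head? = (column k P).head? := by
  cases k with
  | zero => simp [snake, serpentine, head?_column, hlast]
  | succ k =>
    exact (head?_append_of_ne_nil _ (serpentine_ne_nil hPne k)).trans (head?_serpentine hPne k)

theorem getLast?_snake (hLne : L ≠ []) (k : ℕ) :
    (snake P L k).getLast? = L.head?.map (0 :: ·) := by
  rw [snake, getLast?_append_of_ne_nil _ (column_ne_nil hLne 0), getLast?_column,
    if_neg (by simp)]

theorem length_snake (k : ℕ) : (snake P L k).length = k * P.length + L.length := by
  simp [snake, length_serpentine, length_column]

end snake

theorem length_cycle (L Q : List (List ℕ)) (y : List ℕ) (k : ℕ) :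
    (cycle L Q y k).length = L.length + k + k * Q.length := by
  simp [cycle, length_serpentine, Nat.add_assoc]

/-- The induction hypothesis of the construction. -/
structure PathPair (a m : ℕ) (P L : List (List ℕ)) : Prop where
  isHamPath_pi : IsHamPath Adj (follow a 1 m) P
  isHamPath_lam : IsHamPath Adj (follow a 0 m) L
  getLast?_eq : L.getLast? = P.getLast?
  head?_eq : Even m → L.head? = P.head?
  even_length_iff : Even P.length ↔ Odd m
  odd_length : Odd L.length

namespace PathPair

variable {k m : ℕ} {P L Q : List (List ℕ)} {y : List ℕ}

theorem pi_ne_nil (ha : a ≠ 0) (h : PathPair a m P L) : P ≠ [] :=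
  h.isHamPath_pi.ne_nil ⟨_, replicate_mem_follow (Nat.pos_of_ne_zero ha) 1 m⟩

theorem lam_ne_nil (ha : a ≠ 0) (h : PathPair a m P L) : L ≠ [] :=
  h.isHamPath_lam.ne_nil ⟨_, replicate_mem_follow (Nat.pos_of_ne_zero ha) 0 m⟩

theorem isHamPath_zigzag_append_snake (hk : Even k) (h : PathPair (k + 2) m P L) (hm : Odd m) :
    IsHamPath Adj (follow (k + 2) 0 (m + 1)) (zigzag (k + 1) P ++ snake P L k) := by
  have hPne := h.pi_ne_nil (by omega)
  have hPe : Even P.length := h.even_length_iff.2 hm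
  have hzig := isHamPath_zigzag (k + 1) h.isHamPath_pi.isChain h.isHamPath_pi.nodup hPe
  rw [h.isHamPath_pi.setOf_mem_eq] at hzig
  have hpath := hzig.append (isHamPath_snake h.isHamPath_pi hPne h.isHamPath_lam h.getLast?_eq k)
    (Set.disjoint_union_right.2 ⟨disjoint_consUnion fun b hb hb' => by simp at hb hb'; omega,
      disjoint_consUnion fun b hb hb' => by simp at hb hb'; omega⟩) ?_
  · rwa [← Set.union_assoc, consUnion_union_consUnion,
      show {k + 1, k + 1 + 1} ∪ Set.Ioc 0 k = Set.Ioc 0 (k + 2) by ext; simp; omega,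
      ← follow_zero_succ] at hpath
  · rw [getLast?_zigzag _ hPe, head?_snake hPne h.getLast?_eq, head?_column,
      if_neg (Nat.not_odd_iff_even.2 hk)]
    exact forall_adj_map_cons (stringGraph_adj_succ_cons k)

theorem exists_lam_succ (hk : Even k) (h : PathPair (k + 2) m P L) :
    ∃ L', IsHamPath Adj (follow (k + 2) 0 (m + 1)) L' ∧ L'.getLast? = L.head?.map (0 :: ·) ∧
      (Odd m → L'.head? = P.head?.map ((k + 1) :: ·)) ∧ Odd L'.length := by
  have hPne := h.pi_ne_nil (by omega)
  have hLne := h.lam_ne_nil (by omega)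
  rcases Nat.even_or_odd m with hm | hm
  · refine ⟨snake P L (k + 2), ?_, getLast?_snake hLne _,
      fun hm' => absurd hm' (Nat.not_odd_iff_even.2 hm), ?_⟩
    · rw [follow_zero_succ]
      exact isHamPath_snake h.isHamPath_pi hPne h.isHamPath_lam h.getLast?_eq _
    · rw [length_snake]
      exact ((hk.add even_two).mul_right _).add_odd h.odd_length
  · have hPe : Even P.length := h.even_length_iff.2 hm
    have hzne : zigzag (k + 1) P ≠ [] := by
      rw [← length_pos_iff, length_zigzag _ hPe]
      exact Nat.mul_pos two_pos (length_pos_iff.2 hPne)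
    refine ⟨_, h.isHamPath_zigzag_append_snake hk hm, ?_, fun _ => ?_, ?_⟩
    · rw [getLast?_append_of_ne_nil _ (by simp [snake, column_ne_nil hLne]), getLast?_snake hLne]
    · rw [head?_append_of_ne_nil _ hzne, head?_zigzag _ hPe]
    · rw [length_append, length_zigzag _ hPe, length_snake]
      exact (even_two_mul _).add_odd ((hk.mul_right _).add_odd h.odd_length)

theorem succ (hk : Even k) (h : PathPair (k + 2) m P L) :
    ∃ P' L', PathPair (k + 2) (m + 1) P' L' := by
  have hPne := h.pi_ne_nil (by omega)
  have hLne := h.lam_ne_nil (by omega)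
  obtain ⟨L', hL', hlast, hhead, hodd⟩ := h.exists_lam_succ hk
  refine ⟨snake P L (k + 1), L', ⟨?_, hL', ?_, fun hm => ?_, ?_, hodd⟩⟩
  · rw [follow_one_succ (by omega), show Set.Ioo 0 (k + 2) = Set.Ioc 0 (k + 1) by ext; simp; omega]
    exact isHamPath_snake h.isHamPath_pi hPne h.isHamPath_lam h.getLast?_eq _
  · rw [hlast, getLast?_snake hLne]
  · rw [hhead (by simpa [Nat.even_add_one] using hm), head?_snake hPne h.getLast?_eq,
      head?_column, if_pos hk.add_one]
  · rw [length_snake, Nat.odd_add_one, ← h.even_length_iff, Nat.even_add, Nat.even_mul,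
      ← Nat.not_odd_iff_even, ← Nat.not_odd_iff_even (n := L.length)]
    simp [hk.add_one, h.odd_length]

theorem exists_eq_append_singleton (ha : 1 < a) (h : PathPair a m P L) (hm : m ≠ 0) :
    ∃ Q y, Q ≠ [] ∧ P = Q ++ [y] := by
  obtain ⟨Q, y, rfl⟩ := (eq_nil_or_concat' P).resolve_left (h.pi_ne_nil (by omega))
  refine ⟨Q, y, ?_, rfl⟩
  rintro rfl
  have h0 := (h.isHamPath_pi.mem_iff _).2 (replicate_mem_follow (c := 0) (by omega) 1 m)
  have h1 := (h.isHamPath_pi.mem_iff _).2 (replicate_mem_follow (c := 1) ha 1 m)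
  simp only [nil_append, mem_singleton] at h0 h1
  exact zero_ne_one ((replicate_right_inj hm).1 (h0.trans h1.symm))

theorem isHamPath_cycle (hk : Even k) (h : PathPair (k + 2) m (Q ++ [y]) L) (hQ : Q ≠ []) :
    IsHamPath Adj (follow (k + 2) 1 (m + 1)) (cycle L Q y (k + 1)) := by
  obtain ⟨hQchain, -, hQy⟩ := isChain_append.1 h.isHamPath_pi.isChain
  have hyQ : y ∉ Q := fun hy => (nodup_append.1 h.isHamPath_pi.nodup).2.2 y hy y (by simp) rfl
  have hQrev : IsHamPath Adj {x | x ∈ Q.reverse} Q.reverse :=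
    ⟨isChain_reverse.2 (hQchain.imp fun _ _ => .symm),
      nodup_reverse.2 h.isHamPath_pi.nodup.of_append_left, fun _ => Iff.rfl⟩
  have hrow := (isHamPath_serpentine (cons_ne_nil y []) (S := {y})
    ⟨.singleton _, nodup_singleton _, by simp⟩ (k + 1)).reverse fun _ _ => .symm
  have hC := ((isHamPath_map_cons h.isHamPath_lam 0).append hrow
    (disjoint_consUnion fun b hb hb' => by simp at hb hb'; omega) ?_).append
    (isHamPath_serpentine (by simpa using hQ) hQrev (k + 1))
    (Set.disjoint_union_left.2 ⟨disjoint_consUnion fun b hb hb' => by simp at hb hb'; omega,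
      disjoint_consUnion fun _ _ _ => Set.disjoint_singleton_left.2 (by simpa using hyQ)⟩) ?_
  · rw [cycle]
    convert hC using 1
    rw [Set.union_assoc, consUnion_union_consUnion_right, Set.union_comm,
      follow_one_succ (by omega), show Set.Ioo 0 (k + 2) = Set.Ioc 0 (k + 1) by ext; simp; omega,
      ← h.isHamPath_pi.setOf_mem_eq]
    congr! 3 with b
    ext
    simp [or_comm]
  · simp only [getLast?_map, h.getLast?_eq, head?_reverse, getLast?_serpentine (cons_ne_nil _ _)]
    simpa using forall_adj_map_cons (o := some y) (stringGraph_adj_cons_succ 0)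
  · rw [getLast?_append_of_ne_nil _ (by simpa using serpentine_ne_nil (cons_ne_nil y []) k),
      getLast?_reverse, head?_serpentine (cons_ne_nil _ _), head?_serpentine (by simpa using hQ),
      head?_column, head?_column, if_pos hk.add_one, if_pos hk.add_one, head?_reverse]
    rintro x hx _ hz
    obtain ⟨q, hq, rfl⟩ := Option.mem_map.1 hz
    obtain rfl : x = (k + 1) :: y := by simpa using hx.symm
    exact stringGraph_adj_cons_cons_self.2 (hQy q hq y rfl).symm

theorem forall_adj_getLast?_cycle_head?_cycle (h : PathPair a m (Q ++ [y]) L) (hm : Even m)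
    (hQ : Q ≠ []) (hL : L ≠ []) (k : ℕ) :
    ∀ x ∈ (cycle L Q y (k + 1)).getLast?, ∀ z ∈ (cycle L Q y (k + 1)).head?, Adj x z := by
  rw [cycle, getLast?_append_of_ne_nil _ (serpentine_ne_nil (by simpa using hQ) k),
    getLast?_serpentine (by simpa using hQ), getLast?_reverse,
    ← head?_append_of_ne_nil Q (l₂ := [y]) hQ, ← h.head?_eq hm, append_assoc,
    head?_append_of_ne_nil _ (by simpa using hL), head?_map]
  exact forall_adj_map_cons (stringGraph_adj_succ_cons 0)

theorem exists_cycle (hk : Even k) (h : PathPair (k + 2) m P L) (hm : Even m) (hm0 : m ≠ 0) :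
    ∃ C, IsHamPath Adj (follow (k + 2) 1 (m + 1)) C ∧ 3 ≤ C.length ∧
      ∀ x ∈ C.getLast?, ∀ y ∈ C.head?, Adj x y := by
  obtain ⟨Q, y, hQ, rfl⟩ := h.exists_eq_append_singleton (by omega) hm0
  have hL := h.lam_ne_nil (by omega)
  refine ⟨cycle L Q y (k + 1), h.isHamPath_cycle hk hQ, ?_,
    h.forall_adj_getLast?_cycle_head?_cycle hm hQ hL k⟩
  rw [length_cycle]
  have := length_pos_iff.2 hL
  have := length_pos_iff.2 hQ
  nlinarith

end PathPair

theorem exists_pathPair {k : ℕ} (hk : Even k) : ∀ m, ∃ P L, PathPair (k + 2) m P L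
  | 0 => by
    have hmem : ∀ p w, w ∈ [([] : List ℕ)] ↔ w ∈ follow (k + 2) p 0 := by
      rintro p (_ | ⟨c, w⟩) <;> simp [follow]
    exact ⟨[[]], [[]], ⟨.singleton _, nodup_singleton _, hmem 1⟩,
      ⟨.singleton _, nodup_singleton _, hmem 0⟩, rfl, fun _ => rfl, by simp, by simp⟩
  | m + 1 => by
    obtain ⟨P, L, h⟩ := exists_pathPair hk m
    exact h.succ hk

end Metallic

/-- for `a ≥ 2` even and `n ≥ 3` odd, the metallic cube `Π^a_n` is
Hamiltonian. -/
theorem metallic_hamiltonian_cycle (a n : ℕ) (ha : 2 ≤ a) (hae : Even a)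
    (hn : 3 ≤ n) (hno : Odd n) :
    (metallicCube a n).IsHamiltonian := by
  obtain ⟨k, rfl⟩ : ∃ k, a = k + 2 := ⟨a - 2, by omega⟩
  obtain ⟨m, rfl⟩ : ∃ m, n = m + 1 := ⟨n - 1, by omega⟩
  have hk : Even k := by simpa [Nat.even_add] using hae
  obtain ⟨P, L, h⟩ := Metallic.exists_pathPair hk m
  obtain ⟨C, hC, hlen, hclose⟩ :=
    h.exists_cycle hk (by simpa [Nat.odd_add_one] using hno) (by omega)
  exact (Metallic.toStrings _ _).isHamiltonian (Metallic.range_toStrings ▸ hC) hlen hclose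
end
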